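/- arXiv:hep-th/9702026 — 5 statements merged into one kernel-verified Lean document; each statement's English description precedes it below -/
import Mathlib

section
/- Let $(\alpha_L)_{L\ge 0}$ and $(\beta_L)_{L\ge 0}$ be sequences of formal power series (or rational functions in $q$) satisfying $\beta_L = \sum_{i=0}^L \alpha_i / ((q)_{L-i}(aq)_{L+i})$, and let $(\gamma_L)$, $(\delta_L)$ satisfy $\gamma_L = \sum_{i\ge L} \delta_i / ((q)_{i-L}(aq)_{L+i})$ (with all sums convergent). Then $\sum_{L\ge 0} \alpha_L \gamma_L = \sum_{L\ge 0} \beta_L \delta_L$. -/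
open Finset

/-- The $q$-Pochhammer symbol $(x;q)_n = \prod_{k=0}^{n-1}(1-xq^k)$. -/
noncomputable def qp (q x : ℂ) (n : ℕ) : ℂ := ∏ k ∈ Finset.range n, (1 - x * q ^ k)

/-! Both sides are iterated sums of the double series
`∑_{i,j} α_i δ_{i+j} / ((q)_j (aq)_{2i+j})`: summing over `j` first gives `∑ α_L γ_L`,
summing along the antidiagonals `i + j = n` gives `∑ β_n δ_n`. -/

theorem HasSum.sum_antidiagonal {A α : Type*} [AddMonoid A] [HasAntidiagonal A]
    [AddCommMonoid α] [TopologicalSpace α] [ContinuousAdd α] [RegularSpace α]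
    {f : A × A → α} {s : α} (hf : HasSum f s) :
    HasSum (fun n => ∑ p ∈ antidiagonal n, f p) s :=
  (HasAntidiagonal.sigmaAntidiagonalEquivProd.hasSum_iff.mpr hf).sigma
    fun n => (antidiagonal n).hasSum f

section BaileyTransform

variable {R : Type*} [NonUnitalSemiring R] [TopologicalSpace R] [IsTopologicalSemiring R]
  [RegularSpace R] {w : ℕ → ℕ → R} {α β γ δ : ℕ → R} {s : R}

theorem HasSum.bailey_conjugate
    (hs : HasSum (fun p : ℕ × ℕ => α p.1 * w p.1 p.2 * δ (p.1 + p.2)) s)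
    (hγ : ∀ n, HasSum (fun j => w n j * δ (n + j)) (γ n)) :
    HasSum (fun n => α n * γ n) s :=
  hs.prod_fiberwise fun n => by simpa only [mul_assoc] using (hγ n).mul_left (α n)

theorem HasSum.bailey_pair
    (hs : HasSum (fun p : ℕ × ℕ => α p.1 * w p.1 p.2 * δ (p.1 + p.2)) s)
    (hβ : ∀ n, β n = ∑ p ∈ antidiagonal n, α p.1 * w p.1 p.2) :
    HasSum (fun n => β n * δ n) s := by
  convert hs.sum_antidiagonal using 2 with n
  rw [hβ, sum_mul]
  refine sum_congr rfl fun p hp => ?_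
  rw [mem_antidiagonal.mp hp]

end BaileyTransform

theorem bailey_lemma_general (q a : ℂ) (α β γ δ : ℕ → ℂ)
    (hβ : ∀ L, β L = ∑ i ∈ Finset.range (L + 1),
      α i / (qp q q (L - i) * qp q (a * q) (L + i)))
    (hγ : ∀ L, HasSum (fun i : ℕ => δ (L + i) / (qp q q i * qp q (a * q) (L + (L + i)))) (γ L))
    (hsum : Summable (fun P : ℕ × ℕ =>
      α P.1 * δ (P.1 + P.2) / (qp q q P.2 * qp q (a * q) (P.1 + (P.1 + P.2))))) :
    ∑' L, α L * γ L = ∑' L, β L * δ L := by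
  set w : ℕ → ℕ → ℂ := fun i j => (qp q q j * qp q (a * q) (i + (i + j)))⁻¹
  have hs : HasSum (fun p : ℕ × ℕ => α p.1 * w p.1 p.2 * δ (p.1 + p.2)) _ :=
    (hsum.congr fun p => by ring).hasSum
  have hβ_antidiagonal : ∀ n, β n = ∑ p ∈ antidiagonal n, α p.1 * w p.1 p.2 := fun n => by
    rw [hβ, Nat.sum_antidiagonal_eq_sum_range_succ (fun i j => α i * w i j)]
    refine sum_congr rfl fun i hi => ?_
    have hin : i + (i + (n - i)) = n + i := by rw [mem_range] at hi; omega
    simp only [w, hin, div_eq_mul_inv]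
  rw [(hs.bailey_conjugate fun n => (hγ n).congr_fun fun j => by ring).tsum_eq,
    (hs.bailey_pair hβ_antidiagonal).tsum_eq]

/-- Bailey's lemma: if $(\alpha,\beta)$ is a Bailey pair relative to $a$ and
$(\gamma,\delta)$ is a conjugate Bailey pair relative to $a$, then
$\sum_L \alpha_L \gamma_L = \sum_L \beta_L \delta_L$. -/
theorem bailey_lemma (q a : ℂ) (α β γ δ : ℕ → ℂ)
    (hβ : ∀ L, β L = ∑ i ∈ Finset.range (L + 1),
      α i / (qp q q (L - i) * qp q (a * q) (L + i)))
    (hγ : ∀ L, HasSum (fun i : ℕ => δ (L + i) / (qp q q i * qp q (a * q) (L + (L + i)))) (γ L))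
    (hsum : Summable (fun P : ℕ × ℕ =>
      α P.1 * δ (P.1 + P.2) / (qp q q P.2 * qp q (a * q) (P.1 + (P.1 + P.2)))))
    (hαγ : Summable (fun L => α L * γ L))
    (hβδ : Summable (fun L => β L * δ L)) :
    ∑' L, α L * γ L = ∑' L, β L * δ L :=
  bailey_lemma_general q a α β γ δ hβ hγ hsum
end

section
/- For any $a$, $q$ with $|q|<1$, any nonnegative integer $M$, and any $L$ with $0 \le L \le M$, the sequences $\gamma_L = \frac{(\rho_1)_L(\rho_2)_L (aq/\rho_1\rho_2)^L}{(aq/\rho_1)_L (aq/\rho_2)_L (q)_{M-L}(aq)_{M+L}}$ and $\delta_L = \frac{(\rho_1)_L(\rho_2)_L (aq/\rho_1\rho_2)^L (aq/\rho_1\rho_2)_{M-L}}{(aq/\rho_1)_M (aq/\rho_2)_M (q)_{M-L}}$ (with $\gamma_L = \delta_L = 0$ for $L > M$) form a conjugate Bailey pair, i.e. $\gamma_L = \sum_{i\ge L} \delta_i/((q)_{i-L}(aq)_{L+i})$ for all $L \ge 0$. -/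
/-!
For `L ≤ M` put `n = M - L`; only the terms `i ≤ n` of the series are nonzero. Writing
`aq = ρ₁ρ₂z`, the factors `(ρ₁)_L (ρ₂)_L z^L / (aq)_{2L}` come out of every term, and what is
left is the terminating q-Pfaff–Saalschütz sum with parameters `b = ρ₁q^L`, `c = ρ₂q^L`, `z`:
`∑_{i+j=n} (b)_i (c)_i z^i (z)_j / ((q)_i (q)_j (bcz)_i) = (bz)_n (cz)_n / ((q)_n (bcz)_n)`.
That sum is proved by induction on `n` with a WZ pair: the terms of the sum at `n + 1` are the
ratio of consecutive right-hand sides times the terms at `n`, up to a telescoping certificate.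
-/

open Finset

lemma qp_zero (q x : ℂ) : qp q x 0 = 1 := prod_range_zero _

lemma qp_succ (q x : ℂ) (n : ℕ) : qp q x (n + 1) = qp q x n * (1 - x * q ^ n) :=
  prod_range_succ _ _

lemma qp_add (q x : ℂ) (m n : ℕ) : qp q x (m + n) = qp q x m * qp q (x * q ^ m) n := by
  simp only [qp, prod_range_add, pow_add, mul_assoc]

lemma qp_mul_pow_ne_zero {q x : ℂ} (hx : ∀ n, qp q x n ≠ 0) (m n : ℕ) : qp q (x * q ^ m) n ≠ 0 :=
  right_ne_zero_of_mul (qp_add q x m n ▸ hx (m + n))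

lemma one_sub_mul_pow_ne_zero_of_qp {q x : ℂ} (hx : ∀ n, qp q x n ≠ 0) (k : ℕ) :
    1 - x * q ^ k ≠ 0 :=
  right_ne_zero_of_mul (qp_succ q x k ▸ hx (k + 1))

section Saalschutz

variable (q b c z : ℂ)

noncomputable def saalschutzTerm (i j : ℕ) : ℂ :=
  qp q b i * qp q c i * z ^ i * qp q z j / (qp q q i * qp q q j * qp q (b * c * z) i)

noncomputable def saalschutzRatio (n : ℕ) : ℂ :=
  (1 - b * z * q ^ n) * (1 - c * z * q ^ n) / ((1 - q * q ^ n) * (1 - b * c * z * q ^ n))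

/-- The WZ certificate of the q-Pfaff–Saalschütz sum. -/
noncomputable def saalschutzCert (i j : ℕ) : ℂ :=
  -q ^ j * (1 - q ^ i) * (1 - z * q ^ j) * (q - b * c * z * q ^ i) /
    ((1 - q * q ^ (i + j)) * (1 - b * c * z * q ^ (i + j)) * (1 - q * q ^ j)) *
    saalschutzTerm q b c z i j

lemma saalschutzTerm_succ_left (i j : ℕ) :
    saalschutzTerm q b c z (i + 1) j = saalschutzTerm q b c z i j *
      ((1 - b * q ^ i) * (1 - c * q ^ i) * z / ((1 - q * q ^ i) * (1 - b * c * z * q ^ i))) := by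
  simp only [saalschutzTerm, qp_succ, pow_succ, div_eq_mul_inv, mul_inv]
  ring

lemma saalschutzTerm_succ_right (i j : ℕ) :
    saalschutzTerm q b c z i (j + 1) =
      saalschutzTerm q b c z i j * ((1 - z * q ^ j) / (1 - q * q ^ j)) := by
  simp only [saalschutzTerm, qp_succ, div_eq_mul_inv, mul_inv]
  ring

lemma saalschutzCert_zero_left (j : ℕ) : saalschutzCert q b c z 0 j = 0 := by
  simp [saalschutzCert]

lemma saalschutz_step_rational (x y : ℂ)
    (h1 : 1 - q * y ≠ 0) (h2 : 1 - q * (q * y) ≠ 0) (h3 : 1 - q * (x * y * q) ≠ 0)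
    (h4 : 1 - b * c * z * (x * y * q) ≠ 0) (h5 : 1 - q * x ≠ 0) (h6 : 1 - b * c * z * x ≠ 0) :
    (1 - z * y) / (1 - q * y) * ((1 - z * (q * y)) / (1 - q * (q * y)))
      = (1 - b * z * (x * y * q)) * (1 - c * z * (x * y * q)) /
          ((1 - q * (x * y * q)) * (1 - b * c * z * (x * y * q))) * ((1 - z * y) / (1 - q * y))
        + -y * (1 - q * x) * (1 - z * y) * (q - b * c * z * (q * x)) /
            ((1 - q * (x * y * q)) * (1 - b * c * z * (x * y * q)) * (1 - q * y)) *
            ((1 - b * x) * (1 - c * x) * z / ((1 - q * x) * (1 - b * c * z * x)))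
        - -(q * y) * (1 - x) * (1 - z * (q * y)) * (q - b * c * z * x) /
            ((1 - q * (x * y * q)) * (1 - b * c * z * (x * y * q)) * (1 - q * (q * y))) *
            ((1 - z * y) / (1 - q * y)) := by
  -- as atoms, the denominators are not renormalized by `field_simp`
  generalize e₁ : 1 - q * y = d₁ at *
  generalize e₂ : 1 - q * (q * y) = d₂ at *
  generalize e₃ : 1 - q * (x * y * q) = d₃ at *
  generalize e₄ : 1 - b * c * z * (x * y * q) = d₄ at *
  generalize e₅ : 1 - q * x = d₅ at *
  generalize e₆ : 1 - b * c * z * x = d₆ at *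
  field_simp
  subst_vars
  ring

lemma saalschutz_boundary_rational (x : ℂ)
    (h1 : 1 - q ≠ 0) (h5 : 1 - q * x ≠ 0) (h6 : 1 - b * c * z * x ≠ 0) :
    (1 - z) / (1 - q) + (1 - b * x) * (1 - c * x) * z / ((1 - q * x) * (1 - b * c * z * x))
      = (1 - b * z * x) * (1 - c * z * x) / ((1 - q * x) * (1 - b * c * z * x))
        - -(1 - x) * (1 - z) * (q - b * c * z * x) /
            ((1 - q * x) * (1 - b * c * z * x) * (1 - q)) := by
  generalize e₅ : 1 - q * x = d₅ at *
  generalize e₆ : 1 - b * c * z * x = d₆ at *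
  field_simp
  subst_vars
  ring

variable {q b c z}

lemma saalschutzTerm_step (hq : ∀ n, qp q q n ≠ 0) (hw : ∀ n, qp q (b * c * z) n ≠ 0)
    (i k : ℕ) :
    saalschutzTerm q b c z i (k + 2) =
      saalschutzRatio q b c z (i + k + 1) * saalschutzTerm q b c z i (k + 1) +
        saalschutzCert q b c z (i + 1) k - saalschutzCert q b c z i (k + 1) := by
  have key := saalschutz_step_rational q b c z (q ^ i) (q ^ k)
    (one_sub_mul_pow_ne_zero_of_qp hq k)
    (by convert one_sub_mul_pow_ne_zero_of_qp hq (k + 1) using 2; ring)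
    (by convert one_sub_mul_pow_ne_zero_of_qp hq (i + k + 1) using 2; ring)
    (by convert one_sub_mul_pow_ne_zero_of_qp hw (i + k + 1) using 2; ring)
    (one_sub_mul_pow_ne_zero_of_qp hq i) (one_sub_mul_pow_ne_zero_of_qp hw i)
  simp only [saalschutzCert, saalschutzRatio, saalschutzTerm_succ_right, saalschutzTerm_succ_left]
  linear_combination saalschutzTerm q b c z i k * key

lemma saalschutzTerm_boundary (hq : ∀ n, qp q q n ≠ 0) (hw : ∀ n, qp q (b * c * z) n ≠ 0)
    (n : ℕ) :
    saalschutzTerm q b c z n 1 + saalschutzTerm q b c z (n + 1) 0 =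
      saalschutzRatio q b c z n * saalschutzTerm q b c z n 0 - saalschutzCert q b c z n 0 := by
  have key := saalschutz_boundary_rational q b c z (q ^ n)
    (by simpa using one_sub_mul_pow_ne_zero_of_qp hq 0)
    (one_sub_mul_pow_ne_zero_of_qp hq n) (one_sub_mul_pow_ne_zero_of_qp hw n)
  simp only [saalschutzCert, saalschutzRatio, saalschutzTerm_succ_left]
  rw [show saalschutzTerm q b c z n 1 = saalschutzTerm q b c z n (0 + 1) from rfl,
    saalschutzTerm_succ_right]
  linear_combination saalschutzTerm q b c z n 0 * key

lemma sum_saalschutzTerm_succ (hq : ∀ n, qp q q n ≠ 0) (hw : ∀ n, qp q (b * c * z) n ≠ 0)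
    (n : ℕ) :
    ∑ i ∈ range (n + 2), saalschutzTerm q b c z i (n + 1 - i) =
      saalschutzRatio q b c z n * ∑ i ∈ range (n + 1), saalschutzTerm q b c z i (n - i) := by
  have step : ∀ i ∈ range n, saalschutzTerm q b c z i (n + 1 - i) =
      saalschutzRatio q b c z n * saalschutzTerm q b c z i (n - i) +
        (saalschutzCert q b c z (i + 1) (n - (i + 1)) - saalschutzCert q b c z i (n - i)) := by
    intro i hi
    obtain ⟨k, rfl⟩ : ∃ k, n = i + k + 1 := ⟨n - i - 1, by grind⟩
    rw [show i + k + 1 + 1 - i = k + 2 by omega, show i + k + 1 - i = k + 1 by omega,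
      show i + k + 1 - (i + 1) = k by omega, saalschutzTerm_step hq hw]
    ring
  rw [sum_range_succ, sum_range_succ, sum_congr rfl step, sum_add_distrib, ← mul_sum,
    sum_range_sub (fun i ↦ saalschutzCert q b c z i (n - i)), sum_range_succ]
  simp only [Nat.sub_self, show n + 1 - n = 1 by omega, saalschutzCert_zero_left]
  linear_combination saalschutzTerm_boundary hq hw n

theorem saalschutz_sum (hq : ∀ n, qp q q n ≠ 0) (hw : ∀ n, qp q (b * c * z) n ≠ 0) (n : ℕ) :
    ∑ i ∈ range (n + 1), saalschutzTerm q b c z i (n - i) =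
      qp q (b * z) n * qp q (c * z) n / (qp q q n * qp q (b * c * z) n) := by
  induction n with
  | zero => simp [saalschutzTerm, qp_zero]
  | succ n ih =>
    rw [sum_saalschutzTerm_succ hq hw, ih, saalschutzRatio]
    simp only [qp_succ, div_eq_mul_inv, mul_inv]
    ring

end Saalschutz

lemma saalschutzTerm_shift (q b c z : ℂ) (L i j : ℕ) :
    qp q b (L + i) * qp q c (L + i) * z ^ (L + i) * qp q z j /
        (qp q q j * qp q q i * qp q (b * c * z) (L + (L + i))) =
      qp q b L * qp q c L * z ^ L / qp q (b * c * z) (L + L) *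
        saalschutzTerm q (b * q ^ L) (c * q ^ L) z i j := by
  rw [saalschutzTerm, show b * q ^ L * (c * q ^ L) * z = b * c * z * q ^ (L + L) by ring,
    qp_add q b, qp_add q c, ← add_assoc, qp_add q (b * c * z), pow_add]
  simp only [div_eq_mul_inv, mul_inv]
  ring

theorem hasSum_conjugate_pair (q b c z : ℂ) (M : ℕ)
    (hq : ∀ n, qp q q n ≠ 0) (hw : ∀ n, qp q (b * c * z) n ≠ 0)
    (hbz : qp q (b * z) M ≠ 0) (hcz : qp q (c * z) M ≠ 0)
    (γ δ : ℕ → ℂ)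
    (hγ : ∀ L, γ L = if L ≤ M then
      qp q b L * qp q c L * z ^ L /
        (qp q (c * z) L * qp q (b * z) L * qp q q (M - L) * qp q (b * c * z) (M + L))
      else 0)
    (hδ : ∀ L, δ L = if L ≤ M then
      qp q b L * qp q c L * z ^ L * qp q z (M - L) /
        (qp q (c * z) M * qp q (b * z) M * qp q q (M - L))
      else 0) (L : ℕ) :
    HasSum (fun i ↦ δ (L + i) / (qp q q i * qp q (b * c * z) (L + (L + i)))) (γ L) := by
  by_cases hL : L ≤ M
  · obtain ⟨n, rfl⟩ := Nat.exists_eq_add_of_le hL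
    set K := qp q b L * qp q c L * z ^ L /
      (qp q (c * z) (L + n) * qp q (b * z) (L + n) * qp q (b * c * z) (L + L)) with hK
    have hbcz : b * q ^ L * (c * q ^ L) * z = b * c * z * q ^ (L + L) := by ring
    have hterm : ∀ i ∈ range (n + 1),
        δ (L + i) / (qp q q i * qp q (b * c * z) (L + (L + i))) =
          K * saalschutzTerm q (b * q ^ L) (c * q ^ L) z i (n - i) := by
      intro i hi
      rw [mem_range] at hi
      rw [hδ, if_pos (by omega), show L + n - (L + i) = n - i by omega]
      linear_combination saalschutzTerm_shift q b c z L i (n - i) /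
        (qp q (c * z) (L + n) * qp q (b * z) (L + n))
    have hzero : ∀ i ∉ range (n + 1),
        δ (L + i) / (qp q q i * qp q (b * c * z) (L + (L + i))) = 0 := by
      intro i hi
      rw [mem_range] at hi
      rw [hδ, if_neg (by omega), zero_div]
    have hγL : γ L = K * (qp q (b * q ^ L * z) n * qp q (c * q ^ L * z) n /
        (qp q q n * qp q (b * q ^ L * (c * q ^ L) * z) n)) := by
      have hbL := qp_add q (b * z) L n ▸ hbz
      have hcL := qp_add q (c * z) L n ▸ hcz
      rw [hK, hγ, if_pos hL, Nat.add_sub_cancel_left, show L + n + L = L + L + n by omega,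
        qp_add q (b * z), qp_add q (c * z), qp_add q (b * c * z), hbcz,
        show b * q ^ L * z = b * z * q ^ L by ring, show c * q ^ L * z = c * z * q ^ L by ring,
        ← mul_div_mul_right _ _ (mul_ne_zero (right_ne_zero_of_mul hbL) (right_ne_zero_of_mul hcL))]
      ring
    have hw' : ∀ m, qp q (b * q ^ L * (c * q ^ L) * z) m ≠ 0 :=
      hbcz ▸ qp_mul_pow_ne_zero hw (L + L)
    rw [hγL, ← saalschutz_sum hq hw', mul_sum, ← sum_congr rfl hterm]
    exact hasSum_sum_of_ne_finset_zero hzero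
  · have hδ0 : ∀ i, δ (L + i) = 0 := fun i ↦ by rw [hδ, if_neg (by omega)]
    simp only [hγ, if_neg hL, hδ0, zero_div, hasSum_zero]

theorem bailey_conjugate_pair_general (q a ρ₁ ρ₂ : ℂ) (M : ℕ)
    (hq0 : ∀ n : ℕ, qp q q n ≠ 0)
    (haq : ∀ n : ℕ, qp q (a * q) n ≠ 0)
    (hρ₁ : ρ₁ ≠ 0) (hρ₂ : ρ₂ ≠ 0)
    (h₁ : ∀ n : ℕ, qp q (a * q / ρ₁) n ≠ 0)
    (h₂ : ∀ n : ℕ, qp q (a * q / ρ₂) n ≠ 0)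
    (γ δ : ℕ → ℂ)
    (hγ : ∀ L, γ L = if L ≤ M then
      qp q ρ₁ L * qp q ρ₂ L * (a * q / (ρ₁ * ρ₂)) ^ L /
        (qp q (a * q / ρ₁) L * qp q (a * q / ρ₂) L * qp q q (M - L) * qp q (a * q) (M + L))
      else 0)
    (hδ : ∀ L, δ L = if L ≤ M then
      qp q ρ₁ L * qp q ρ₂ L * (a * q / (ρ₁ * ρ₂)) ^ L * qp q (a * q / (ρ₁ * ρ₂)) (M - L) /
        (qp q (a * q / ρ₁) M * qp q (a * q / ρ₂) M * qp q q (M - L))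
      else 0) :
    ∀ L, HasSum (fun i : ℕ => δ (L + i) / (qp q q i * qp q (a * q) (L + (L + i)))) (γ L) := by
  set z := a * q / (ρ₁ * ρ₂) with hz
  have e₁ : a * q / ρ₁ = ρ₂ * z := by rw [hz]; field_simp
  have e₂ : a * q / ρ₂ = ρ₁ * z := by rw [hz]; field_simp
  have e : a * q = ρ₁ * ρ₂ * z := by rw [hz]; field_simp
  rw [e₁] at h₁ hγ hδ
  rw [e₂] at h₂ hγ hδ
  rw [e] at haq hγ ⊢
  exact hasSum_conjugate_pair q ρ₁ ρ₂ z M hq0 haq (h₂ M) (h₁ M) γ δ hγ hδ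

/-- Bailey's original conjugate Bailey pair: the explicitly given sequences
$(\gamma,\delta)$ (supported on $0 \le L \le M$) satisfy
$\gamma_L = \sum_{i\ge L} \delta_i/((q)_{i-L}(aq)_{L+i})$ for all $L\ge 0$. -/
theorem bailey_conjugate_pair (q a ρ₁ ρ₂ : ℂ) (M : ℕ)
    (hq : ‖q‖ < 1)
    (hq0 : ∀ n : ℕ, qp q q n ≠ 0)
    (haq : ∀ n : ℕ, qp q (a * q) n ≠ 0)
    (hρ₁ : ρ₁ ≠ 0) (hρ₂ : ρ₂ ≠ 0)
    (h₁ : ∀ n : ℕ, qp q (a * q / ρ₁) n ≠ 0)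
    (h₂ : ∀ n : ℕ, qp q (a * q / ρ₂) n ≠ 0)
    (γ δ : ℕ → ℂ)
    (hγ : ∀ L, γ L = if L ≤ M then
      qp q ρ₁ L * qp q ρ₂ L * (a * q / (ρ₁ * ρ₂)) ^ L /
        (qp q (a * q / ρ₁) L * qp q (a * q / ρ₂) L * qp q q (M - L) * qp q (a * q) (M + L))
      else 0)
    (hδ : ∀ L, δ L = if L ≤ M then
      qp q ρ₁ L * qp q ρ₂ L * (a * q / (ρ₁ * ρ₂)) ^ L * qp q (a * q / (ρ₁ * ρ₂)) (M - L) /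
        (qp q (a * q / ρ₁) M * qp q (a * q / ρ₂) M * qp q q (M - L))
      else 0) :
    ∀ L, HasSum (fun i : ℕ => δ (L + i) / (qp q q i * qp q (a * q) (L + (L + i)))) (γ L) :=
  bailey_conjugate_pair_general q a ρ₁ ρ₂ M hq0 haq hρ₁ hρ₂ h₁ h₂ γ δ hγ hδ
end

section
/- Let $(\alpha_L(a,q),\beta_L(a,q))$ be a Bailey pair relative to $a$ (as formal identities valid for $q$ replaced by $1/q$). Define $A_L = a^L q^{L^2}\alpha_L(a^{-1},q^{-1})$ and $B_L = a^{-L}q^{-L(L+1)}\beta_L(a^{-1},q^{-1})$. Then $(A,B)$ is again a Bailey pair relative to $a$ in base $q$, i.e. $B_L = \sum_{i=0}^L A_i/((q)_{L-i}(aq)_{L+i})$. -/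
/-!
Pulling $-xq^k$ out of the $k$-th factor gives $(x;q)_n = (-x)^n q^{\binom n2} (x^{-1};q^{-1})_n$.
Applied to the two denominators $(q)_{L-i}(aq)_{L+i}$, the signs cancel and, since
$\binom{L-i+1}2 + \binom{L+i+1}2 = L(L+1) + i^2$, the two products become
$a^{L+i} q^{L(L+1)+i^2}$ times the denominators of the pair relative to $a^{-1}$ in base $q^{-1}$.
The normalisations of $A$ and $B$ absorb this factor term by term.
-/

open Finset

theorem qp_eq_neg_pow_mul_qp_inv {q x : ℂ} (hq : q ≠ 0) (hx : x ≠ 0) (n : ℕ) :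
    qp q x n = (-x) ^ n * q ^ n.choose 2 * qp q⁻¹ x⁻¹ n := by
  induction n with
  | zero => simp [qp]
  | succ n ih =>
    have hfactor : 1 - x * q ^ n = -x * q ^ n * (1 - x⁻¹ * q⁻¹ ^ n) := by
      rw [inv_pow]
      field_simp
      ring
    simp only [qp, prod_range_succ] at ih ⊢
    rw [ih, hfactor, Nat.choose_succ_succ', Nat.choose_one_right]
    ring

theorem Nat.choose_two_sub_add_choose_two_add {L i : ℕ} (hi : i ≤ L) :
    (L - i + 1).choose 2 + (L + i + 1).choose 2 = L * (L + 1) + i ^ 2 := by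
  obtain ⟨j, rfl⟩ := Nat.exists_eq_add_of_le hi
  have h₁ := Nat.add_one_mul_choose_eq j 1
  have h₂ := Nat.add_one_mul_choose_eq (i + j + i) 1
  rw [Nat.add_sub_cancel_left]
  simp only [Nat.choose_one_right] at h₁ h₂
  apply Nat.eq_of_mul_eq_mul_right two_pos
  nlinarith

theorem qp_mul_qp_eq_pow_mul_qp_inv_mul_qp_inv {q a : ℂ} (hq : q ≠ 0) (ha : a ≠ 0) {L i : ℕ}
    (hi : i ≤ L) :
    qp q q (L - i) * qp q (a * q) (L + i) =
      a ^ (L + i) * q ^ (L * (L + 1) + i ^ 2) *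
        (qp q⁻¹ q⁻¹ (L - i) * qp q⁻¹ (a⁻¹ * q⁻¹) (L + i)) := by
  have hsign : (-1 : ℂ) ^ (L - i) * (-1) ^ (L + i) = 1 := by
    rw [← pow_add, show L - i + (L + i) = 2 * L by omega, pow_mul]
    simp
  rw [qp_eq_neg_pow_mul_qp_inv hq hq, qp_eq_neg_pow_mul_qp_inv hq (mul_ne_zero ha hq), mul_inv,
    ← Nat.choose_two_sub_add_choose_two_add hi, Nat.choose_succ_succ' (L - i),
    Nat.choose_succ_succ' (L + i), Nat.choose_one_right, Nat.choose_one_right]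
  linear_combination (a ^ (L + i) * q ^ (L - i + (L - i).choose 2 + (L + i + (L + i).choose 2)) *
    (qp q⁻¹ q⁻¹ (L - i) * qp q⁻¹ (a⁻¹ * q⁻¹) (L + i))) * hsign

theorem dual_bailey_pair_general (q a : ℂ) (hq : q ≠ 0) (ha : a ≠ 0)
    (α β A B : ℕ → ℂ)
    (hBP : ∀ L, β L = ∑ i ∈ Finset.range (L + 1),
      α i / (qp q⁻¹ q⁻¹ (L - i) * qp q⁻¹ (a⁻¹ * q⁻¹) (L + i)))
    (hA : ∀ L, A L = a ^ L * q ^ (L ^ 2) * α L)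
    (hB : ∀ L, B L = (a ^ L)⁻¹ * (q ^ (L * (L + 1)))⁻¹ * β L) :
    ∀ L, B L = ∑ i ∈ Finset.range (L + 1),
      A i / (qp q q (L - i) * qp q (a * q) (L + i)) := by
  intro L
  rw [hB, hBP, mul_sum]
  refine sum_congr rfl fun i hi => ?_
  have hiL : i ≤ L := Nat.lt_succ_iff.mp (mem_range.mp hi)
  rw [hA, qp_mul_qp_eq_pow_mul_qp_inv_mul_qp_inv hq ha hiL, pow_add, pow_add]
  field_simp

/-- The dual Bailey pair: if $(\alpha,\beta)$ is a Bailey pair relative to $a^{-1}$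
in base $q^{-1}$ (i.e. the original pair with $q \mapsto 1/q$, $a \mapsto 1/a$),
then $A_L = a^L q^{L^2}\alpha_L$, $B_L = a^{-L}q^{-L(L+1)}\beta_L$ form a
Bailey pair relative to $a$ in base $q$. -/
theorem dual_bailey_pair (q a : ℂ) (hq : q ≠ 0) (ha : a ≠ 0)
    (hq0 : ∀ n : ℕ, qp q q n ≠ 0)
    (haq : ∀ n : ℕ, qp q (a * q) n ≠ 0)
    (hq0' : ∀ n : ℕ, qp q⁻¹ q⁻¹ n ≠ 0)
    (haq' : ∀ n : ℕ, qp q⁻¹ (a⁻¹ * q⁻¹) n ≠ 0)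
    (α β A B : ℕ → ℂ)
    (hBP : ∀ L, β L = ∑ i ∈ Finset.range (L + 1),
      α i / (qp q⁻¹ q⁻¹ (L - i) * qp q⁻¹ (a⁻¹ * q⁻¹) (L + i)))
    (hA : ∀ L, A L = a ^ L * q ^ (L ^ 2) * α L)
    (hB : ∀ L, B L = (a ^ L)⁻¹ * (q ^ (L * (L + 1)))⁻¹ * β L) :
    ∀ L, B L = ∑ i ∈ Finset.range (L + 1),
      A i / (qp q q (L - i) * qp q (a * q) (L + i)) :=
  dual_bailey_pair_general q a hq ha α β A B hBP hA hB
end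

section
/- For $a \in \{0,1\}$ and $|q|<1$: $\frac{1}{(q)_\infty}\sum_{j=-\infty}^{\infty} \left( q^{j(10j+1+2a)} - q^{(2j+1)(5j+2-a)} \right) = \sum_{n=0}^{\infty} \frac{q^{n(n+a)}}{(q)_n}$. -/
/-!
Andrews' finitization. For `n ≥ 0` put
`F_n = ∑_k q^{k(k+a)} [n-k, k]` and `B_n = ∑_j (-1)^j q^{j(5j+1)/2 + aj} [n+a, ⌊(n-5j)/2⌋]`.
Pascal's rules for Gaussian binomials show that both satisfy `X_{n+2} = X_{n+1} + q^{n+a+1} X_n`;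
for `B_n` this needs two Pascal steps, taken in an order that depends on the parity of `n - j`,
and leaves defect terms that telescope in `j`. Since `F_0 = F_1 = B_0 = B_1 = 1` for
`a ≤ 1`, `F_n = B_n`. For `|q| < 1` the Gaussian binomials are uniformly bounded and tend to
`1/(q)_∞` (resp. `1/(q)_k` in `F_n`), so Tannery's theorem gives
`F_n → ∑ q^{k(k+a)}/(q)_k` and `B_n → (q)_∞⁻¹ ∑_j (-1)^j q^{j(5j+1)/2 + aj}`; the last sum,
split according to the parity of `j`, is the bilateral sum of the statement.
-/

open Finset

open Filter Topology

theorem summable_of_eq_zero_of_lt_abs {α : Type*} [AddCommMonoid α] [TopologicalSpace α]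
    {f : ℤ → α} (B : ℤ) (h : ∀ j, B < |j| → f j = 0) : Summable f :=
  summable_of_ne_finset_zero (s := Icc (-B) B) fun j hj => h j <| by
    rw [mem_Icc] at hj
    rw [lt_abs]
    omega

theorem summable_pow_natAbs {r : ℝ} (hr₀ : 0 ≤ r) (hr₁ : r < 1) :
    Summable fun j : ℤ => r ^ j.natAbs :=
  .of_nat_of_neg (by simpa using summable_geometric_of_lt_one hr₀ hr₁)
    (by simpa using summable_geometric_of_lt_one hr₀ hr₁)

theorem tsum_int_eq_tsum_two_mul_add_neg {E : Type*} [NormedAddCommGroup E] [CompleteSpace E]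
    {f : ℤ → E} (hf : Summable f) : ∑' j, f j = ∑' j, (f (2 * j) + f (-(2 * j + 1))) := by
  have h₁ : Function.Injective fun j : ℤ => 2 * j := mul_right_injective₀ two_ne_zero
  have h₂ : Function.Injective fun j : ℤ => -(2 * j + 1) := fun i j h => by simp only at h; omega
  have hc : IsCompl (Set.range fun j : ℤ => 2 * j) (Set.range fun j : ℤ => -(2 * j + 1)) := by
    constructor
    · rw [Set.disjoint_left]
      rintro _ ⟨i, rfl⟩ ⟨j, h⟩
      simp only at h
      omega
    · rw [codisjoint_iff_le_sup]
      intro k _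
      obtain ⟨i, rfl | rfl⟩ := Int.even_or_odd' k
      · exact Or.inl ⟨i, rfl⟩
      · exact Or.inr ⟨-i - 1, by ring⟩
  have he := hf.comp_injective h₁
  have ho := hf.comp_injective h₂
  rw [((h₁.hasSum_range_iff.2 he.hasSum).add_isCompl hc (h₂.hasSum_range_iff.2 ho.hasSum)).tsum_eq,
    ← he.tsum_add ho]
  rfl

namespace RogersRamanujan

variable {q : ℂ}

theorem qp_eq_prod (n : ℕ) : qp q q n = ∏ k ∈ range n, (1 - q ^ (k + 1)) :=
  prod_congr rfl fun k _ => by rw [pow_succ']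

theorem qp_zero : qp q q 0 = 1 := rfl

theorem qp_succ (n : ℕ) : qp q q (n + 1) = qp q q n * (1 - q ^ (n + 1)) := by
  rw [qp_eq_prod, qp_eq_prod, prod_range_succ]

/-- The Gaussian binomial coefficient `[N, m]_q`, set to zero unless `0 ≤ m ≤ N`. -/
noncomputable def qBinom (q : ℂ) (N : ℕ) (m : ℤ) : ℂ :=
  if 0 ≤ m ∧ m ≤ N then qp q q N / (qp q q m.toNat * qp q q (N - m).toNat) else 0

theorem qBinom_eq_zero {N : ℕ} {m : ℤ} (h : m < 0 ∨ N < m) : qBinom q N m = 0 :=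
  if_neg (by omega)

theorem qBinom_eq {N k l : ℕ} {m : ℤ} (hN : k + l = N) (hm : m = k) :
    qBinom q N m = qp q q N / (qp q q k * qp q q l) := by
  rw [qBinom, if_pos (by omega), show m.toNat = k by omega, show ((N : ℤ) - m).toNat = l by omega]

theorem qBinom_symm (N : ℕ) (m : ℤ) : qBinom q N (N - m) = qBinom q N m := by
  unfold qBinom
  by_cases h : 0 ≤ m ∧ m ≤ N
  · rw [if_pos h, if_pos (by omega), sub_sub_cancel, mul_comm]
  · rw [if_neg h, if_neg (by omega)]

theorem qBinom_zero_right (hqp : ∀ n, qp q q n ≠ 0) (N : ℕ) : qBinom q N 0 = 1 := by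
  rw [qBinom_eq (k := 0) (zero_add N) Nat.cast_zero.symm, qp_zero, one_mul, div_self (hqp N)]

theorem qBinom_self (hqp : ∀ n, qp q q n ≠ 0) (N : ℕ) : qBinom q N N = 1 := by
  rw [qBinom_eq (l := 0) (add_zero N) rfl, qp_zero, mul_one, div_self (hqp N)]

theorem qBinom_succ (hqp : ∀ n, qp q q n ≠ 0) (N : ℕ) (m : ℤ) :
    qBinom q (N + 1) m = qBinom q N (m - 1) + q ^ m * qBinom q N m := by
  rcases lt_or_ge m 0 with h | h₀
  · simp [qBinom_eq_zero, h, show m - 1 < 0 by omega]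
  rcases lt_or_ge ((N : ℤ) + 1) m with h | h₁
  · simp [qBinom_eq_zero, h, show (N : ℤ) < m - 1 by omega, show (N : ℤ) < m by omega]
  obtain rfl | h₀ := h₀.eq_or_lt'
  · simp [qBinom_zero_right hqp, qBinom_eq_zero]
  obtain rfl | h₁ := h₁.eq_or_lt
  · rw [← Nat.cast_succ, qBinom_self hqp, Nat.cast_succ, add_sub_cancel_right, qBinom_self hqp,
      qBinom_eq_zero (Or.inr (lt_add_one _)), mul_zero, add_zero]
  obtain ⟨k, l, rfl, rfl⟩ : ∃ k l : ℕ, m = k + 1 ∧ N = k + l + 1 :=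
    ⟨(m - 1).toNat, N - m.toNat, by omega, by omega⟩
  obtain ⟨hk, hk'⟩ := mul_ne_zero_iff.1 (qp_succ (q := q) k ▸ hqp (k + 1))
  obtain ⟨hl, hl'⟩ := mul_ne_zero_iff.1 (qp_succ (q := q) l ▸ hqp (l + 1))
  rw [qBinom_eq (k := k + 1) (l := l + 1) (by omega) (by omega),
    qBinom_eq (k := k) (l := l + 1) (by omega) (by omega),
    qBinom_eq (k := k + 1) (l := l) (by omega) (by omega),
    show (k : ℤ) + 1 = ((k + 1 : ℕ) : ℤ) by push_cast; rfl, zpow_natCast,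
    qp_succ (k + l + 1), qp_succ k, qp_succ l, qp_succ (k + l)]
  field_simp
  ring

theorem qBinom_succ' (hqp : ∀ n, qp q q n ≠ 0) (N : ℕ) (m : ℤ) :
    qBinom q (N + 1) m = qBinom q N m + q ^ ((N : ℤ) + 1 - m) * qBinom q N (m - 1) := by
  rw [← qBinom_symm (N + 1) m, qBinom_succ hqp, ← qBinom_symm N m, ← qBinom_symm N (m - 1)]
  push_cast
  ring_nf

def rrExponent (a : ℕ) (j : ℤ) : ℤ := j * (5 * j + 1) / 2 + a * j

theorem two_mul_rrExponent (a : ℕ) (j : ℤ) :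
    2 * rrExponent a j = j * (5 * j + 1) + 2 * a * j := by
  have h : 2 ∣ j * (5 * j + 1) := by
    obtain ⟨r, hr⟩ := Int.even_mul_succ_self j
    exact ⟨r + 2 * j * j, by linear_combination hr⟩
  rw [rrExponent, mul_add, Int.mul_ediv_cancel' h]
  ring

theorem rrExponent_add_one (a : ℕ) (j : ℤ) :
    rrExponent a (j + 1) = rrExponent a j + (5 * j + 3 + a) :=
  mul_left_cancel₀ two_ne_zero <| by
    linear_combination two_mul_rrExponent a (j + 1) - two_mul_rrExponent a j

theorem natAbs_le_rrExponent {a : ℕ} (ha : a ≤ 1) (j : ℤ) : (j.natAbs : ℤ) ≤ rrExponent a j := by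
  have h := two_mul_rrExponent a j
  rw [Int.natCast_natAbs]
  rcases le_or_gt 0 j with hj | hj
  · rw [abs_of_nonneg hj]
    nlinarith [Int.le_self_sq j, mul_nonneg (Nat.cast_nonneg (α := ℤ) a) hj]
  · have : (a : ℤ) ≤ 1 := by exact_mod_cast ha
    rw [abs_of_neg hj]
    nlinarith

noncomputable def rrTerm (q : ℂ) (a : ℕ) (j : ℤ) : ℂ := (-1) ^ j * q ^ rrExponent a j

theorem rrTerm_add_one (hq0 : q ≠ 0) (a : ℕ) (j : ℤ) :
    rrTerm q a (j + 1) = -(q ^ (5 * j + 3 + a) * rrTerm q a j) := by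
  rw [rrTerm, rrTerm, rrExponent_add_one, zpow_add₀ hq0, zpow_add_one₀ (by norm_num)]
  ring

theorem rrTerm_two_mul (a : ℕ) (j : ℤ) :
    rrTerm q a (2 * j) = q ^ (j * (10 * j + 1 + 2 * (a : ℤ))) := by
  have hE : rrExponent a (2 * j) = j * (10 * j + 1 + 2 * (a : ℤ)) :=
    mul_left_cancel₀ two_ne_zero (by linear_combination two_mul_rrExponent a (2 * j))
  rw [rrTerm, hE, (even_two_mul j).neg_one_zpow, one_mul]

theorem rrTerm_neg_two_mul_add_one (a : ℕ) (j : ℤ) :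
    rrTerm q a (-(2 * j + 1)) = -q ^ ((2 * j + 1) * (5 * j + 2 - (a : ℤ))) := by
  have hE : rrExponent a (-(2 * j + 1)) = (2 * j + 1) * (5 * j + 2 - (a : ℤ)) :=
    mul_left_cancel₀ two_ne_zero (by linear_combination two_mul_rrExponent a (-(2 * j + 1)))
  rw [rrTerm, hE, (odd_two_mul_add_one j).neg.neg_one_zpow, neg_one_mul]

/-- `/` on `ℤ` rounds down here: the binomial is `[n + a, ⌊(n - 5j)/2⌋]`. -/
noncomputable def bosonicTerm (q : ℂ) (a n : ℕ) (j : ℤ) : ℂ :=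
  rrTerm q a j * qBinom q (n + a) ((n - 5 * j) / 2)

noncomputable def bosonicPoly (q : ℂ) (a n : ℕ) : ℂ := ∑' j, bosonicTerm q a n j

noncomputable def bosonicDefect (q : ℂ) (a n : ℕ) (j : ℤ) : ℂ :=
  if Even ((n : ℤ) - j) then
    rrTerm q a j * q ^ ((n + 2 - 5 * j) / 2) * qBinom q (n + a) ((n + 2 - 5 * j) / 2)
  else 0

theorem bosonicTerm_add_two_of_even (hqp : ∀ n, qp q q n ≠ 0) (hq0 : q ≠ 0) {a n : ℕ} {j m : ℤ}
    (hm : (n : ℤ) - 5 * j = 2 * m) :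
    bosonicTerm q a (n + 2) j = bosonicTerm q a (n + 1) j + q ^ (n + a + 1) * bosonicTerm q a n j
      + (bosonicDefect q a n j - bosonicDefect q a n (j + 1)) := by
  have he : Even ((n : ℤ) - j) := ⟨m + 2 * j, by omega⟩
  have ho : ¬ Even ((n : ℤ) - (j + 1)) := Int.not_even_iff_odd.2 ⟨m + 2 * j - 1, by omega⟩
  simp only [bosonicTerm, bosonicDefect, if_pos he, if_neg ho, Nat.cast_add, Nat.cast_ofNat,
    Nat.cast_one]
  rw [show ((n : ℤ) + 2 - 5 * j) / 2 = m + 1 by omega, show ((n : ℤ) + 1 - 5 * j) / 2 = m by omega,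
    show ((n : ℤ) - 5 * j) / 2 = m by omega, show n + 2 + a = n + a + 1 + 1 by ring,
    qBinom_succ hqp, add_sub_cancel_right, qBinom_succ' hqp (n + a) (m + 1),
    show n + 1 + a = n + a + 1 by ring, add_sub_cancel_right]
  have hexp : q ^ (m + 1) * q ^ (((n + a : ℕ) : ℤ) + 1 - (m + 1)) = q ^ (n + a + 1) := by
    rw [← zpow_add₀ hq0, ← zpow_natCast]
    push_cast
    ring_nf
  linear_combination rrTerm q a j * qBinom q (n + a) m * hexp

theorem bosonicTerm_add_two_of_odd (hqp : ∀ n, qp q q n ≠ 0) (hq0 : q ≠ 0) {a n : ℕ} {j m : ℤ}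
    (hm : (n : ℤ) - 5 * j = 2 * m + 1) :
    bosonicTerm q a (n + 2) j = bosonicTerm q a (n + 1) j + q ^ (n + a + 1) * bosonicTerm q a n j
      + (bosonicDefect q a n j - bosonicDefect q a n (j + 1)) := by
  have he : Even ((n : ℤ) - (j + 1)) := ⟨m + 2 * j, by omega⟩
  have ho : ¬ Even ((n : ℤ) - j) := Int.not_even_iff_odd.2 ⟨m + 2 * j, by omega⟩
  simp only [bosonicTerm, bosonicDefect, if_pos he, if_neg ho, Nat.cast_add, Nat.cast_ofNat,
    Nat.cast_one]
  rw [show ((n : ℤ) + 2 - 5 * j) / 2 = m + 1 by omega,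
    show ((n : ℤ) + 1 - 5 * j) / 2 = m + 1 by omega, show ((n : ℤ) - 5 * j) / 2 = m by omega,
    show ((n : ℤ) + 2 - 5 * (j + 1)) / 2 = m - 1 by omega, show n + 2 + a = n + a + 1 + 1 by ring,
    qBinom_succ' hqp, add_sub_cancel_right, qBinom_succ hqp (n + a) m,
    show n + 1 + a = n + a + 1 by ring, rrTerm_add_one hq0]
  have hexp : q ^ (((n + a + 1 : ℕ) : ℤ) + 1 - (m + 1)) * q ^ m = q ^ (n + a + 1) := by
    rw [← zpow_add₀ hq0, ← zpow_natCast]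
    push_cast
    ring_nf
  have hexp' : q ^ (5 * j + 3 + a) * q ^ (m - 1) = q ^ (((n + a + 1 : ℕ) : ℤ) + 1 - (m + 1)) := by
    rw [← zpow_add₀ hq0]
    congr 1
    push_cast
    omega
  linear_combination rrTerm q a j * qBinom q (n + a) m * hexp
    - rrTerm q a j * qBinom q (n + a) (m - 1) * hexp'

theorem bosonicTerm_add_two (hqp : ∀ n, qp q q n ≠ 0) (hq0 : q ≠ 0) (a n : ℕ) (j : ℤ) :
    bosonicTerm q a (n + 2) j = bosonicTerm q a (n + 1) j + q ^ (n + a + 1) * bosonicTerm q a n j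
      + (bosonicDefect q a n j - bosonicDefect q a n (j + 1)) := by
  obtain ⟨m, hm | hm⟩ := Int.even_or_odd' ((n : ℤ) - 5 * j)
  exacts [bosonicTerm_add_two_of_even hqp hq0 hm, bosonicTerm_add_two_of_odd hqp hq0 hm]

theorem summable_bosonicTerm (q : ℂ) (a n : ℕ) : Summable (bosonicTerm q a n) :=
  summable_of_eq_zero_of_lt_abs (n + a) fun j hj => by
    rw [bosonicTerm, qBinom_eq_zero (by rw [lt_abs] at hj; push_cast; omega), mul_zero]

theorem summable_bosonicDefect (q : ℂ) (a n : ℕ) : Summable (bosonicDefect q a n) :=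
  summable_of_eq_zero_of_lt_abs (n + a) fun j hj => by
    rw [bosonicDefect, qBinom_eq_zero (by rw [lt_abs] at hj; push_cast; omega), mul_zero, ite_self]

theorem bosonicPoly_add_two (hqp : ∀ n, qp q q n ≠ 0) (hq0 : q ≠ 0) (a n : ℕ) :
    bosonicPoly q a (n + 2) = bosonicPoly q a (n + 1) + q ^ (n + a + 1) * bosonicPoly q a n := by
  have hG := summable_bosonicDefect q a n
  have hG' : Summable fun j => bosonicDefect q a n (j + 1) :=
    hG.comp_injective (add_left_injective 1)
  have htelescope : ∑' j, (bosonicDefect q a n j - bosonicDefect q a n (j + 1)) = 0 := by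
    rw [hG.tsum_sub hG', sub_eq_zero]
    exact ((Equiv.addRight (1 : ℤ)).tsum_eq _).symm
  unfold bosonicPoly
  rw [tsum_congr (bosonicTerm_add_two hqp hq0 a n), Summable.tsum_add
      ((summable_bosonicTerm q a (n + 1)).add ((summable_bosonicTerm q a n).mul_left _))
      (hG.sub hG'),
    Summable.tsum_add (summable_bosonicTerm q a (n + 1)) ((summable_bosonicTerm q a n).mul_left _),
    tsum_mul_left, htelescope, add_zero]

theorem bosonicPoly_of_le_one (hqp : ∀ n, qp q q n ≠ 0) {a n : ℕ} (ha : a ≤ 1) (hn : n ≤ 1) :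
    bosonicPoly q a n = 1 := by
  rw [bosonicPoly, tsum_eq_single 0 fun j hj => by
      rw [bosonicTerm, qBinom_eq_zero (by push_cast; omega), mul_zero],
    bosonicTerm, show ((n : ℤ) - 5 * 0) / 2 = 0 by omega, qBinom_zero_right hqp]
  simp [rrTerm, rrExponent]

noncomputable def fermionicTerm (q : ℂ) (a n k : ℕ) : ℂ := q ^ (k * (k + a)) * qBinom q (n - k) k

noncomputable def fermionicPoly (q : ℂ) (a n : ℕ) : ℂ := ∑' k, fermionicTerm q a n k

theorem fermionicTerm_eq_zero {a n k : ℕ} (h : n < 2 * k) : fermionicTerm q a n k = 0 := by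
  rw [fermionicTerm, qBinom_eq_zero (Or.inr (by omega)), mul_zero]

theorem fermionicTerm_zero (hqp : ∀ n, qp q q n ≠ 0) (a n : ℕ) : fermionicTerm q a n 0 = 1 := by
  rw [fermionicTerm, Nat.cast_zero, qBinom_zero_right hqp, mul_one, zero_mul, pow_zero]

theorem summable_fermionicTerm (q : ℂ) (a n : ℕ) : Summable (fermionicTerm q a n) :=
  summable_of_ne_finset_zero (s := range (n + 1)) fun _ hk =>
    fermionicTerm_eq_zero (by simp at hk; omega)

theorem fermionicTerm_add_two_succ (hqp : ∀ n, qp q q n ≠ 0) (hq0 : q ≠ 0) (a n k : ℕ) :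
    fermionicTerm q a (n + 2) (k + 1)
      = fermionicTerm q a (n + 1) (k + 1) + q ^ (n + a + 1) * fermionicTerm q a n k := by
  rcases lt_or_ge n k with h | h
  · rw [fermionicTerm_eq_zero (by omega), fermionicTerm_eq_zero (by omega),
      fermionicTerm_eq_zero (by omega)]
    ring
  rw [fermionicTerm, fermionicTerm, fermionicTerm, show n + 2 - (k + 1) = n - k + 1 by omega,
    qBinom_succ' hqp, show n + 1 - (k + 1) = n - k by omega, Nat.cast_succ, add_sub_cancel_right]
  have hexp : q ^ ((k + 1) * (k + 1 + a)) * q ^ (((n - k : ℕ) : ℤ) + 1 - (k + 1))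
      = q ^ (n + a + 1) * q ^ (k * (k + a)) := by
    rw [← zpow_natCast, ← zpow_natCast, ← zpow_natCast, ← zpow_add₀ hq0, ← zpow_add₀ hq0]
    congr 1
    push_cast [h]
    ring
  linear_combination qBinom q (n - k) k * hexp

theorem fermionicPoly_add_two (hqp : ∀ n, qp q q n ≠ 0) (hq0 : q ≠ 0) (a n : ℕ) :
    fermionicPoly q a (n + 2)
      = fermionicPoly q a (n + 1) + q ^ (n + a + 1) * fermionicPoly q a n := by
  unfold fermionicPoly
  rw [(summable_fermionicTerm q a (n + 2)).tsum_eq_zero_add,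
    (summable_fermionicTerm q a (n + 1)).tsum_eq_zero_add,
    tsum_congr (fermionicTerm_add_two_succ hqp hq0 a n),
    Summable.tsum_add ((summable_nat_add_iff 1).2 (summable_fermionicTerm q a (n + 1)))
      ((summable_fermionicTerm q a n).mul_left _),
    tsum_mul_left, fermionicTerm_zero hqp, fermionicTerm_zero hqp]
  ring

theorem fermionicPoly_of_le_one (hqp : ∀ n, qp q q n ≠ 0) (a : ℕ) {n : ℕ} (hn : n ≤ 1) :
    fermionicPoly q a n = 1 := by
  rw [fermionicPoly, tsum_eq_single 0 fun k hk => fermionicTerm_eq_zero (by omega),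
    fermionicTerm_zero hqp]

theorem fermionicPoly_eq_bosonicPoly (hqp : ∀ n, qp q q n ≠ 0) (hq0 : q ≠ 0) {a : ℕ}
    (ha : a ≤ 1) (n : ℕ) : fermionicPoly q a n = bosonicPoly q a n := by
  induction n using Nat.twoStepInduction with
  | zero => rw [fermionicPoly_of_le_one hqp a zero_le_one, bosonicPoly_of_le_one hqp ha zero_le_one]
  | one => rw [fermionicPoly_of_le_one hqp a le_rfl, bosonicPoly_of_le_one hqp ha le_rfl]
  | more n h₀ h₁ => rw [fermionicPoly_add_two hqp hq0, bosonicPoly_add_two hqp hq0, h₀, h₁]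

theorem one_sub_pow_ne_zero (hq : ‖q‖ < 1) {k : ℕ} (hk : k ≠ 0) : 1 - q ^ k ≠ 0 := by
  refine sub_ne_zero.2 fun h => ?_
  have := pow_lt_one₀ (norm_nonneg q) hq hk
  rw [← norm_pow, ← h, norm_one] at this
  exact lt_irrefl _ this

theorem qp_ne_zero (hq : ‖q‖ < 1) (n : ℕ) : qp q q n ≠ 0 := by
  rw [qp_eq_prod]
  exact prod_ne_zero_iff.2 fun k _ => one_sub_pow_ne_zero hq k.succ_ne_zero

theorem tendsto_qp (hq : ‖q‖ < 1) :
    Tendsto (qp q q) atTop (𝓝 (∏' k : ℕ, (1 - q ^ (k + 1)))) := by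
  simpa only [← qp_eq_prod] using (ModularForm.multipliable_one_sub_pow hq).hasProd.tendsto_prod_nat

theorem tprod_one_sub_pow_ne_zero (hq : ‖q‖ < 1) : ∏' k : ℕ, (1 - q ^ (k + 1)) ≠ 0 := by
  simpa [sub_eq_add_neg] using tprod_one_add_ne_zero_of_summable (f := fun k : ℕ => -q ^ (k + 1))
    (fun k => by simpa [← sub_eq_add_neg] using one_sub_pow_ne_zero hq k.succ_ne_zero)
    (by simpa using (summable_nat_add_iff 1).2 (summable_geometric_of_lt_one (norm_nonneg _) hq))

/-- `(q)_n` and `(q)_n⁻¹` converge, hence are bounded. -/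
theorem exists_norm_qBinom_le (hq : ‖q‖ < 1) : ∃ B, ∀ N m, ‖qBinom q N m‖ ≤ B := by
  obtain ⟨C, hC⟩ := isBounded_iff_forall_norm_le.1
    (Metric.isBounded_range_of_tendsto _ (tendsto_qp hq))
  obtain ⟨D, hD⟩ := isBounded_iff_forall_norm_le.1 (Metric.isBounded_range_of_tendsto _
    ((tendsto_qp hq).inv₀ (tprod_one_sub_pow_ne_zero hq)))
  have hC0 : 0 ≤ C := (norm_nonneg _).trans (hC _ (Set.mem_range_self 0))
  have hD0 : 0 ≤ D := (norm_nonneg _).trans (hD _ (Set.mem_range_self 0))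
  refine ⟨C * (D * D), fun N m => ?_⟩
  unfold qBinom
  split_ifs
  · rw [div_eq_mul_inv, mul_inv, norm_mul, norm_mul]
    gcongr
    exacts [hC _ (Set.mem_range_self _), hD _ (Set.mem_range_self _), hD _ (Set.mem_range_self _)]
  · rw [norm_zero]
    positivity

theorem tendsto_qBinom (hq : ‖q‖ < 1) {ι : Type*} {l : Filter ι} {k m : ι → ℕ}
    (hk : Tendsto k l atTop) (hm : Tendsto m l atTop) :
    Tendsto (fun i => qBinom q (k i + m i) (k i)) l (𝓝 (∏' k : ℕ, (1 - q ^ (k + 1)))⁻¹) := by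
  have hP := tprod_one_sub_pow_ne_zero hq
  have h := ((tendsto_qp hq).comp (hk.atTop_add_atTop hm)).div
    (((tendsto_qp hq).comp hk).mul ((tendsto_qp hq).comp hm)) (mul_ne_zero hP hP)
  rw [div_mul_cancel_left₀ hP] at h
  exact h.congr fun i => (qBinom_eq rfl rfl).symm

theorem tendsto_qBinom_sub_const (hq : ‖q‖ < 1) (k : ℕ) :
    Tendsto (fun n => qBinom q (n - k) k) atTop (𝓝 (qp q q k)⁻¹) := by
  have hP := tprod_one_sub_pow_ne_zero hq
  have h := ((tendsto_qp hq).comp (tendsto_sub_atTop_nat k)).div (tendsto_const_nhds.mul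
    ((tendsto_qp hq).comp (tendsto_sub_atTop_nat (2 * k)))) (mul_ne_zero (qp_ne_zero hq k) hP)
  rw [div_mul_cancel_right₀ hP] at h
  refine h.congr' ?_
  filter_upwards [eventually_ge_atTop (2 * k)] with n hn
  exact (qBinom_eq (by simp only; omega) rfl).symm

theorem norm_rrTerm_le (hq : ‖q‖ ≤ 1) {a : ℕ} (ha : a ≤ 1) (j : ℤ) :
    ‖rrTerm q a j‖ ≤ ‖q‖ ^ j.natAbs := by
  have hE := natAbs_le_rrExponent ha j
  rw [rrTerm, norm_mul, norm_zpow, norm_zpow, norm_neg, norm_one, one_zpow, one_mul,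
    ← Int.toNat_of_nonneg (by omega : 0 ≤ rrExponent a j), zpow_natCast]
  exact pow_le_pow_of_le_one (norm_nonneg q) hq (by omega)

theorem tendsto_bosonicTerm (hq : ‖q‖ < 1) (a : ℕ) (j : ℤ) :
    Tendsto (fun n => bosonicTerm q a n j) atTop
      (𝓝 (rrTerm q a j * (∏' k : ℕ, (1 - q ^ (k + 1)))⁻¹)) := by
  have hk : Tendsto (fun n : ℕ => (((n : ℤ) - 5 * j) / 2).toNat) atTop atTop :=
    tendsto_atTop_atTop.2 fun b => ⟨2 * b + 5 * j.natAbs, fun n hn => by omega⟩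
  have hl : Tendsto (fun n : ℕ => n + a - (((n : ℤ) - 5 * j) / 2).toNat) atTop atTop :=
    tendsto_atTop_atTop.2 fun b => ⟨2 * b + 5 * j.natAbs, fun n hn => by omega⟩
  refine ((tendsto_qBinom hq hk hl).const_mul _).congr' ?_
  filter_upwards [eventually_ge_atTop (5 * j.natAbs)] with n hn
  rw [bosonicTerm]
  congr 2 <;> omega

theorem tendsto_bosonicPoly (hq : ‖q‖ < 1) {a : ℕ} (ha : a ≤ 1) :
    Tendsto (bosonicPoly q a) atTop
      (𝓝 ((∑' j, rrTerm q a j) * (∏' k : ℕ, (1 - q ^ (k + 1)))⁻¹)) := by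
  obtain ⟨B, hB⟩ := exists_norm_qBinom_le hq
  rw [← tsum_mul_right]
  refine tendsto_tsum_of_dominated_convergence
    ((summable_pow_natAbs (norm_nonneg q) hq).mul_right B)
    (tendsto_bosonicTerm hq a) (.of_forall fun n j => ?_)
  rw [bosonicTerm, norm_mul]
  exact mul_le_mul (norm_rrTerm_le hq.le ha j) (hB _ _) (norm_nonneg _) (by positivity)

theorem tendsto_fermionicPoly (hq : ‖q‖ < 1) (a : ℕ) :
    Tendsto (fermionicPoly q a) atTop (𝓝 (∑' n : ℕ, q ^ (n * (n + a)) / qp q q n)) := by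
  obtain ⟨B, hB⟩ := exists_norm_qBinom_le hq
  simp only [div_eq_mul_inv]
  refine tendsto_tsum_of_dominated_convergence
    ((summable_geometric_of_lt_one (norm_nonneg q) hq).mul_right B)
    (fun k => (tendsto_qBinom_sub_const hq k).const_mul _) (.of_forall fun n k => ?_)
  rw [fermionicTerm, norm_mul, norm_pow]
  exact mul_le_mul (pow_le_pow_of_le_one (norm_nonneg q) hq.le
    ((Nat.le_mul_self k).trans (Nat.mul_le_mul_left k (Nat.le_add_right k a))))
    (hB _ _) (norm_nonneg _) (by positivity)

theorem tsum_rrTerm_mul_inv_tprod (hq : ‖q‖ < 1) {a : ℕ} (ha : a ≤ 1) :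
    (∑' j, rrTerm q a j) * (∏' k : ℕ, (1 - q ^ (k + 1)))⁻¹
      = ∑' n : ℕ, q ^ (n * (n + a)) / qp q q n := by
  rcases eq_or_ne q 0 with rfl | hq0
  · rw [tsum_eq_single 0 fun j hj => by
        rw [rrTerm, zero_zpow _ (by have := natAbs_le_rrExponent ha j; omega), mul_zero],
      tsum_eq_single 0 fun n hn => by simp [hn]]
    simp [rrTerm, rrExponent, qp_zero]
  · exact tendsto_nhds_unique (tendsto_bosonicPoly hq ha)
      ((tendsto_fermionicPoly hq a).congr (fermionicPoly_eq_bosonicPoly (qp_ne_zero hq) hq0 ha))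

theorem tsum_rrTerm (hq : ‖q‖ < 1) {a : ℕ} (ha : a ≤ 1) :
    ∑' j, rrTerm q a j = ∑' j : ℤ, (q ^ (j * (10 * j + 1 + 2 * (a : ℤ)))
      - q ^ ((2 * j + 1) * (5 * j + 2 - (a : ℤ)))) := by
  have hs : Summable (rrTerm q a) :=
    (summable_pow_natAbs (norm_nonneg q) hq).of_norm_bounded (norm_rrTerm_le hq.le ha)
  rw [tsum_int_eq_tsum_two_mul_add_neg hs]
  refine tsum_congr fun j => ?_
  rw [rrTerm_two_mul, rrTerm_neg_two_mul_add_one, ← sub_eq_add_neg]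

end RogersRamanujan

open RogersRamanujan in
/-- The Rogers–Ramanujan identities in Bose–Fermi form: for $a\in\{0,1\}$,
$\frac{1}{(q)_\infty}\sum_{j\in\mathbb{Z}}\bigl(q^{j(10j+1+2a)}-q^{(2j+1)(5j+2-a)}\bigr)
= \sum_{n\ge0}\frac{q^{n(n+a)}}{(q)_n}$. -/
theorem rogers_ramanujan (q : ℂ) (hq : ‖q‖ < 1) (a : ℕ) (ha : a ≤ 1) :
    (∏' k : ℕ, (1 - q ^ (k + 1)))⁻¹ *
        ∑' j : ℤ, (q ^ (j * (10 * j + 1 + 2 * (a : ℤ)))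
          - q ^ ((2 * j + 1) * (5 * j + 2 - (a : ℤ))))
      = ∑' n : ℕ, q ^ (n * (n + a)) / qp q q n := by
  rw [← tsum_rrTerm hq ha, mul_comm, tsum_rrTerm_mul_inv_tprod hq ha]
end

section
/- Let $p,p'$ be coprime with $p < p' < 2p$. Define $\nu_0,\dots,\nu_n$ by the continued fraction expansion $\frac{p'}{p'-p} = 1 + \nu_0 + \cfrac{1}{\nu_1 + \cfrac{1}{\nu_2 + \cdots + \cfrac{1}{\nu_n + 2}}}$, and set $t_i = \sum_{j=0}^{i-1}\nu_j$ for $1 \le i \le n+1$, $t_0 = -1$. Define $y_{-1}=0$, $y_0=1$, $y_{m+1} = y_{m-1} + (\nu_m + \delta_{m,0} + 2\delta_{m,n})y_m$, and Takahashi lengths $l_{j+1} = y_{m-1} + (j - t_m)y_m$ for $t_m < j \le t_{m+1} + \delta_{m,n}$, $0 \le m \le n$. Then every integer $b$ with $1 \le b < p'$ admits a unique decomposition $b = \sum_{i=1}^{k} l_{\beta_i+1}$ where the indices satisfy $t_{\xi_i} < \beta_i \le t_{\xi_i+1} + \delta_{\xi_i,n}$ with $0 \le \xi_1 < \xi_2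 < \cdots < \xi_k \le n$, and additionally $\xi_{i+1} \ge \xi_i + 2$ whenever $\beta_i = t_{\xi_i+1}$. -/
open Finset

/-- The continued fraction $\nu_i + \cfrac{1}{\nu_{i+1} + \cdots + \cfrac{1}{\nu_n + 2}}$,
computed with `k` remaining steps (so `cf ν k i` with `k = n - i` gives the tail
starting at zone `i`, the innermost term being $\nu_n + 2$). -/
def cf (ν : ℕ → ℕ) : ℕ → ℕ → ℚ
  | 0, i => ν i + 2
  | k + 1, i => ν i + 1 / cf ν k (i + 1)

/-- The partial sums $t_i = \sum_{j=0}^{i-1}\nu_j$ (for $i\ge1$), with $t_0 = -1$. -/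
def tt (ν : ℕ → ℕ) (i : ℕ) : ℤ :=
  if i = 0 then -1 else ∑ j ∈ Finset.range i, (ν j : ℤ)

/-- The sequence $y_{-1}=0$, $y_0=1$,
$y_{m+1}=y_{m-1}+(\nu_m+\delta_{m,0}+2\delta_{m,n})y_m$, indexed so that
`yy ν n k` is $y_{k-1}$. -/
def yy (ν : ℕ → ℕ) (n : ℕ) : ℕ → ℤ
  | 0 => 0
  | 1 => 1
  | m + 2 => yy ν n m +
      ((ν m : ℤ) + (if m = 0 then 1 else 0) + (if m = n then 2 else 0)) * yy ν n (m + 1)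

/-!
Number all Takahashi lengths by one global index `j` (zone `0` starts at `j = 0`), so that
`length j` is the length of index `j` of its zone. Within a zone the lengths grow by $y_m$, and at
the seam between zones the two affine formulas agree; hence
`length (j + 1) = length j + length (zoneBase j)`, where `zoneBase j` is $t_\xi$ for the zone ξ of
`j` (and `0` for ξ = 0). This is the recursion of an Ostrowski-type numeration system, and the
conditions on $(\xi_i, \beta_i)$ say precisely that every index lies below `zoneBase` of each
larger index. For such a system the greedy algorithm writes every `0 ≤ b < length j` uniquely
as a sum of lengths of smaller admissible indices.

It remains to identify the bound: the index just past zone `n` has length $y_{n+1}$, and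
$y_{n+1} = p'$. Evaluating the continued fraction from the inside gives
$p'/(p'-p) = K(c_0, …, c_n) / K(c_1, …, c_n)$ for the continuants `K` of the coefficients $c_m$ of
the recursion of `y`, both fractions are reduced, and $K(c_0, …, c_n) = y_{n+1}$ because a
continuant can be expanded from either end.
-/

namespace TakahashiSuzuki

/-- `continuant a k i` is the continuant of the `k - 1` entries `a i, …, a (i + k - 2)`. -/
def continuant (a : ℕ → ℤ) : ℕ → ℕ → ℤ
  | 0, _ => 0
  | 1, _ => 1
  | k + 2, i => a i * continuant a (k + 1) (i + 1) + continuant a k (i + 2)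

theorem continuant_add_two_eq_last (a : ℕ → ℤ) : ∀ k i,
    continuant a (k + 2) i = a (i + k) * continuant a (k + 1) i + continuant a k i
  | 0, i => by simp [continuant]
  | 1, i => by simp [continuant]; ring
  | k + 2, i => by
    have h₁ := continuant_add_two_eq_last a (k + 1) (i + 1)
    have h₂ := continuant_add_two_eq_last a k (i + 2)
    simp only [continuant] at h₁ h₂ ⊢
    rw [h₁, h₂, show i + 1 + (k + 1) = i + (k + 2) by omega,
      show i + 2 + k = i + (k + 2) by omega]
    ring

theorem one_le_continuant {a : ℕ → ℤ} : ∀ {k i : ℕ}, (∀ j < i + k, 1 ≤ a j) →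
    1 ≤ continuant a (k + 1) i
  | 0, _, _ => le_rfl
  | 1, i, ha => by simpa [continuant] using ha i (by omega)
  | k + 2, i, ha => by
    have h₁ := one_le_continuant (k := k + 1) (i := i + 1) fun j hj => ha j (by omega)
    have h₂ := one_le_continuant (k := k) (i := i + 2) fun j hj => ha j (by omega)
    have h₀ := ha i (by omega)
    rw [continuant]
    nlinarith

theorem isCoprime_continuant (a : ℕ → ℤ) : ∀ k i,
    IsCoprime (continuant a (k + 1) i) (continuant a k (i + 1))
  | 0, _ => isCoprime_one_left
  | k + 1, i => by
    rw [continuant, add_comm, mul_comm]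
    exact (isCoprime_continuant a k (i + 1)).symm.add_mul_left_left (a i)

def coeff (ν : ℕ → ℕ) (n m : ℕ) : ℤ :=
  ν m + (if m = 0 then 1 else 0) + (if m = n then 2 else 0)

theorem one_le_coeff {ν : ℕ → ℕ} {n m : ℕ} (hν : ∀ i, i ≤ n → 1 ≤ ν i) (hm : m ≤ n) :
    1 ≤ coeff ν n m := by
  have := hν m hm
  unfold coeff
  split_ifs <;> omega

theorem yy_eq_continuant (ν : ℕ → ℕ) (n : ℕ) : ∀ m, yy ν n m = continuant (coeff ν n) m 0
  | 0 => rfl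
  | 1 => rfl
  | m + 2 => by
    rw [continuant_add_two_eq_last, zero_add, ← yy_eq_continuant ν n m,
      ← yy_eq_continuant ν n (m + 1), yy, coeff]
    ring

/-- The `1 +` in front of `cf ν n 0` in the theorem is the $\delta_{m,0}$ of `coeff`. -/
theorem cf_eq_continuant_div {ν : ℕ → ℕ} {n : ℕ} (hν : ∀ i, i ≤ n → 1 ≤ ν i) :
    ∀ k i, i + k = n → (if i = 0 then 1 else 0) + cf ν k i =
      (continuant (coeff ν n) (k + 2) i : ℚ) / continuant (coeff ν n) (k + 1) (i + 1)
  | 0, i, hi => by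
    subst hi
    simp [cf, continuant, coeff]
    ring
  | k + 1, i, hi => by
    have ih := cf_eq_continuant_div hν k (i + 1) (by omega)
    rw [if_neg (Nat.succ_ne_zero i), zero_add] at ih
    have hpos (k' j : ℕ) (h : j + k' ≤ n + 1) : (0 : ℚ) < continuant (coeff ν n) (k' + 1) j := by
      exact_mod_cast (one_le_continuant fun l hl => one_le_coeff hν (by omega)).trans_lt' one_pos
    have h₁ := hpos (k + 1) (i + 1) (by omega)
    have h₂ := hpos k (i + 2) (by omega)
    have hc : coeff ν n i = ν i + if i = 0 then 1 else 0 := by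
      rw [coeff, if_neg (show i ≠ n by omega), add_zero]
    rw [cf, ih, show continuant (coeff ν n) (k + 1 + 2) i = coeff ν n i *
      continuant (coeff ν n) (k + 2) (i + 1) + continuant (coeff ν n) (k + 1) (i + 2) from rfl, hc]
    push_cast
    field_simp
    split_ifs <;> ring

theorem eq_yy_of_cf_eq {p p' n : ℕ} {ν : ℕ → ℕ} (hco : Nat.Coprime p p') (h1 : p < p')
    (hν : ∀ i, i ≤ n → 1 ≤ ν i) (hcf : (p' : ℚ) / ((p' : ℚ) - p) = 1 + cf ν n 0) :
    (p' : ℤ) = yy ν n (n + 2) := by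
  have key := cf_eq_continuant_div hν n 0 (zero_add n)
  rw [if_pos rfl, ← hcf] at key
  have hcop : Nat.Coprime (p' : ℤ).natAbs ((p' : ℤ) - p).natAbs := by
    rw [show (p' : ℤ) - p = ((p' - p : ℕ) : ℤ) by omega, Int.natAbs_natCast, Int.natAbs_natCast,
      Nat.coprime_self_sub_right h1.le]
    exact hco.symm
  rw [yy_eq_continuant]
  exact (Rat.div_int_inj (by omega) (one_le_continuant fun j _ => one_le_coeff hν (by omega)) hcop
    (Int.isCoprime_iff_gcd_eq_one.1 (isCoprime_continuant _ (n + 1) 0)) (by push_cast; exact key)).1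

/-- For Fibonacci numbers `L j = F (j + 2)` and `lo j = j - 1`, this is Zeckendorf numeration. -/
structure IsNumerationSystem (L : ℕ → ℤ) (lo : ℕ → ℕ) : Prop where
  lo_le : ∀ j, lo j ≤ j
  zero : L 0 = 1
  succ : ∀ j, L (j + 1) = L j + L (lo j)

def Admissible (lo : ℕ → ℕ) (S : Finset ℕ) : Prop :=
  ∀ j ∈ S, ∀ i ∈ S, i < j → i < lo j

variable {L : ℕ → ℤ} {lo : ℕ → ℕ} {S T : Finset ℕ} {j : ℕ}

theorem Admissible.subset (h : Admissible lo S) (hT : T ⊆ S) : Admissible lo T :=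
  fun j hj i hi hij => h j (hT hj) i (hT hi) hij

theorem Admissible.erase_subset_range (h : Admissible lo S) (hS : S ⊆ range (j + 1))
    (hj : j ∈ S) : S.erase j ⊆ range (lo j) := fun i hi => by
  obtain ⟨hij, hi⟩ := mem_erase.1 hi
  exact mem_range.2 (h j hj i hi (lt_of_le_of_ne (mem_range_succ_iff.1 (hS hi)) hij))

theorem Admissible.insert (h : Admissible lo S) (hlo : lo j ≤ j) (hS : S ⊆ range (lo j)) :
    Admissible lo (insert j S) := by
  have hlt : ∀ i ∈ S, i < lo j := fun i hi => mem_range.1 (hS hi)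
  intro k hk i hi hik
  rcases mem_insert.1 hk with rfl | hkS
  · rcases mem_insert.1 hi with rfl | hiS
    · exact absurd hik (lt_irrefl _)
    · exact hlt i hiS
  · rcases mem_insert.1 hi with rfl | hiS
    · exact absurd ((hlt k hkS).trans_le hlo) (not_lt.2 hik.le)
    · exact h k hkS i hiS hik

theorem admissible_image_iff {k : ℕ} {b : Fin k → ℕ} (hb : StrictMono b) :
    Admissible lo (univ.image b) ↔ ∀ i i', i < i' → b i < lo (b i') := by
  simp only [Admissible, mem_image, mem_univ, true_and, forall_exists_index,
    forall_apply_eq_imp_iff, hb.lt_iff_lt]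
  exact forall_comm

theorem subset_range_of_notMem (hS : S ⊆ range (j + 1)) (hj : j ∉ S) : S ⊆ range j :=
  (subset_insert_iff_of_notMem hj).1 (range_add_one ▸ hS)

namespace IsNumerationSystem

theorem pos (h : IsNumerationSystem L lo) (j : ℕ) : 0 < L j := by
  induction j using Nat.strong_induction_on with
  | _ j ih =>
    rcases j with _ | j
    · rw [h.zero]; exact one_pos
    · rw [h.succ]
      exact add_pos (ih j j.lt_succ_self) (ih _ (Nat.lt_succ_of_le (h.lo_le j)))

theorem sum_lt (h : IsNumerationSystem L lo) (j : ℕ) :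
    ∀ S, Admissible lo S → S ⊆ range j → ∑ i ∈ S, L i < L j := by
  induction j using Nat.strong_induction_on with
  | _ j ih =>
    intro S hS hSj
    rcases j with _ | j
    · rw [range_zero, subset_empty] at hSj
      rw [hSj, sum_empty, h.zero]
      exact one_pos
    · rw [h.succ]
      by_cases hj : j ∈ S
      · rw [← add_sum_erase S L hj]
        exact (add_lt_add_iff_left (L j)).2 (ih _ (Nat.lt_succ_of_le (h.lo_le j)) _
          (hS.subset (erase_subset j S)) (hS.erase_subset_range hSj hj))
      · exact (ih j j.lt_succ_self S hS (subset_range_of_notMem hSj hj)).trans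
          (lt_add_of_pos_right _ (h.pos _))

theorem sum_lt_sum_of_mem (h : IsNumerationSystem L lo)
    (hT : Admissible lo T) (hTj : T ⊆ range j) (hj : j ∈ S) :
    ∑ i ∈ T, L i < ∑ i ∈ S, L i := by
  rw [← add_sum_erase S L hj]
  exact (h.sum_lt j T hT hTj).trans_le
    (le_add_of_nonneg_right (sum_nonneg fun i _ => (h.pos i).le))

theorem exists_sum_eq (h : IsNumerationSystem L lo) (j : ℕ) :
    ∀ c, 0 ≤ c → c < L j → ∃ S ⊆ range j, Admissible lo S ∧ ∑ i ∈ S, L i = c := by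
  induction j using Nat.strong_induction_on with
  | _ j ih =>
    intro c hc0 hcj
    rcases j with _ | j
    · rw [h.zero] at hcj
      exact ⟨∅, empty_subset _, fun _ h => absurd h (notMem_empty _), by simp; omega⟩
    · rw [h.succ] at hcj
      by_cases hc : c < L j
      · obtain ⟨S, hSj, hS, hsum⟩ := ih j j.lt_succ_self c hc0 hc
        exact ⟨S, hSj.trans (range_subset_range.2 j.le_succ), hS, hsum⟩
      · obtain ⟨S, hSj, hS, hsum⟩ :=
          ih _ (Nat.lt_succ_of_le (h.lo_le j)) (c - L j) (by omega) (by omega)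
        have hjS : j ∉ S := fun hj => by
          have := mem_range.1 (hSj hj); have := h.lo_le j; omega
        refine ⟨insert j S, ?_, hS.insert (h.lo_le j) hSj, ?_⟩
        · rw [range_add_one]
          exact insert_subset_insert j (hSj.trans (range_subset_range.2 (h.lo_le j)))
        · rw [sum_insert hjS, hsum]; ring

theorem eq_of_sum_eq (h : IsNumerationSystem L lo) (j : ℕ) :
    ∀ S T, S ⊆ range j → T ⊆ range j → Admissible lo S → Admissible lo T →
      ∑ i ∈ S, L i = ∑ i ∈ T, L i → S = T := by
  induction j with
  | zero => intro S T hS hT _ _ _; simp_all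
  | succ j ih =>
    intro S T hSj hTj hS hT hsum
    by_cases hjS : j ∈ S <;> by_cases hjT : j ∈ T
    · have hsub := fun {U : Finset ℕ} (hU : Admissible lo U) (hUj : U ⊆ range (j + 1))
          (hj : j ∈ U) => (hU.erase_subset_range hUj hj).trans
          (range_subset_range.2 (h.lo_le j))
      rw [← insert_erase hjS, ← insert_erase hjT,
        ih _ _ (hsub hS hSj hjS) (hsub hT hTj hjT) (hS.subset (erase_subset j S))
          (hT.subset (erase_subset j T))
          (by rw [← add_sum_erase S L hjS, ← add_sum_erase T L hjT] at hsum; omega)]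
    · exact absurd hsum
        (h.sum_lt_sum_of_mem hT (subset_range_of_notMem hTj hjT) hjS).ne'
    · exact absurd hsum
        (h.sum_lt_sum_of_mem hS (subset_range_of_notMem hSj hjS) hjT).ne
    · exact ih S T (subset_range_of_notMem hSj hjS) (subset_range_of_notMem hTj hjT) hS hT hsum

theorem existsUnique_sum_eq (h : IsNumerationSystem L lo) {c : ℤ} (hc0 : 0 ≤ c)
    (hc : c < L j) : ∃! S, S ⊆ range j ∧ Admissible lo S ∧ ∑ i ∈ S, L i = c := by
  obtain ⟨S, hSj, hS, hsum⟩ := h.exists_sum_eq j c hc0 hc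
  exact ⟨S, ⟨hSj, hS, hsum⟩, fun T ⟨hTj, hT, hTsum⟩ =>
    h.eq_of_sum_eq j T S hTj hSj hT hS (hTsum.trans hsum.symm)⟩

end IsNumerationSystem

variable {ν : ℕ → ℕ} {n : ℕ}

theorem tt_of_ne_zero {m : ℕ} (hm : m ≠ 0) : tt ν m = ((∑ i ∈ range m, ν i : ℕ) : ℤ) := by
  rw [tt, if_neg hm]
  push_cast
  rfl

theorem tt_succ (m : ℕ) : tt ν (m + 1) = tt ν m + ν m + if m = 0 then 1 else 0 := by
  rw [tt_of_ne_zero (Nat.add_one_ne_zero m), sum_range_succ]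
  rcases eq_or_ne m 0 with rfl | hm
  · simp [tt]
  · rw [tt_of_ne_zero hm, if_neg hm]
    push_cast
    ring

theorem monotone_tt : Monotone (tt ν) :=
  monotone_nat_of_le_succ fun m => by rw [tt_succ]; split_ifs <;> omega

theorem tt_lt_tt_succ (hν : ∀ i, i ≤ n → 1 ≤ ν i) {m : ℕ} (hm : m ≤ n) :
    tt ν m < tt ν (m + 1) := by
  have := hν m hm
  rw [tt_succ]
  split_ifs <;> omega

theorem neg_one_le_tt (m : ℕ) : -1 ≤ tt ν m :=
  monotone_tt (Nat.zero_le m)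

variable (ν n) in
/-- The zone of a global index `j`: the largest $m \le n$ with $t_m < j$, so zone `n` also takes
every $j > t_{n+1}$. -/
def zone (j : ℕ) : ℕ :=
  Nat.findGreatest (fun m => tt ν m < j) n

theorem zone_le (j : ℕ) : zone ν n j ≤ n :=
  Nat.findGreatest_le n

theorem le_zone_iff {m j : ℕ} (hm : m ≤ n) : m ≤ zone ν n j ↔ tt ν m < j := by
  refine ⟨fun h => (monotone_tt h).trans_lt ?_, Nat.le_findGreatest (P := fun m => tt ν m < j) hm⟩
  exact Nat.findGreatest_spec (P := fun m => tt ν m < j) (Nat.zero_le n)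
    (by rw [tt, if_pos rfl]; omega)

theorem tt_zone_lt (j : ℕ) : tt ν (zone ν n j) < j :=
  (le_zone_iff (zone_le j)).1 le_rfl

theorem le_tt_zone_succ {j : ℕ} (h : zone ν n j < n) : (j : ℤ) ≤ tt ν (zone ν n j + 1) :=
  not_lt.1 fun hlt => (le_zone_iff (m := zone ν n j + 1) h).2 hlt |>.not_gt (Nat.lt_succ_self _)

variable (ν n) in
def InZone (m : ℕ) (x : ℤ) : Prop :=
  tt ν m < x ∧ x ≤ tt ν (m + 1) + if m = n then 1 else 0

variable (ν n) in
/-- The global indices, $0 \le j \le t_{n+1} + 1$, are those below `top ν n`. -/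
def top : ℕ := ∑ i ∈ range (n + 1), ν i + 2

theorem top_eq : (top ν n : ℤ) = tt ν (n + 1) + 2 := by
  rw [top, tt_of_ne_zero (Nat.add_one_ne_zero n)]
  push_cast
  rfl

theorem InZone.nonneg {m : ℕ} {x : ℤ} (h : InZone ν n m x) : 0 ≤ x := by
  have := neg_one_le_tt (ν := ν) m
  have := h.1
  omega

theorem inZone_zone {j : ℕ} (hj : j < top ν n) : InZone ν n (zone ν n j) j := by
  refine ⟨tt_zone_lt j, ?_⟩
  split_ifs with h
  · have := top_eq (ν := ν) (n := n)
    rw [h]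
    omega
  · exact (le_tt_zone_succ (lt_of_le_of_ne (zone_le j) h)).trans (le_add_of_nonneg_right le_rfl)

theorem inZone_iff {m j : ℕ} (hm : m ≤ n) :
    InZone ν n m j ↔ j < top ν n ∧ zone ν n j = m := by
  refine ⟨fun h => ⟨?_, le_antisymm ?_ ((le_zone_iff hm).2 h.1)⟩,
    fun ⟨hj, hz⟩ => hz ▸ inZone_zone hj⟩
  · have := monotone_tt (ν := ν) (show m + 1 ≤ n + 1 by omega)
    have := top_eq (ν := ν) (n := n)
    have := h.2
    split_ifs at this <;> omega
  · rcases eq_or_lt_of_le hm with rfl | hmn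
    · exact zone_le j
    · by_contra hlt
      have := (le_zone_iff (m := m + 1) hmn).1 (not_le.1 hlt)
      have := h.2
      rw [if_neg hmn.ne] at this
      omega

variable (ν n) in
/-- The Takahashi length $y_{m-1} + (x - t_m) y_m$ of an index `x` in zone `m`. -/
def lengthIn (m : ℕ) (x : ℤ) : ℤ :=
  yy ν n m + (x - tt ν m) * yy ν n (m + 1)

variable (ν n) in
def length (j : ℕ) : ℤ :=
  lengthIn ν n (zone ν n j) j

theorem lengthIn_add_one (m : ℕ) (x : ℤ) :
    lengthIn ν n m (x + 1) = lengthIn ν n m x + yy ν n (m + 1) := by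
  rw [lengthIn, lengthIn]
  ring

theorem lengthIn_tt_succ (m : ℕ) :
    lengthIn ν n m (tt ν (m + 1) + if m = n then 2 else 0) = yy ν n (m + 2) := by
  rw [lengthIn, tt_succ, yy]
  ring

theorem zone_zero : zone ν n 0 = 0 :=
  Nat.findGreatest_eq_zero_iff.2 fun m hm _ => by
    rw [tt_of_ne_zero hm.ne']
    omega

theorem length_zero : length ν n 0 = 1 := by
  rw [length, zone_zero, lengthIn, tt, if_pos rfl]
  rfl

theorem length_sum_range (hν : ∀ i, i ≤ n → 1 ≤ ν i) {m : ℕ} (hm : m ≤ n) :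
    length ν n (∑ i ∈ range m, ν i) = yy ν n (m + 1) := by
  rcases m with _ | m
  · rw [sum_range_zero, length_zero]
    rfl
  · have hz : zone ν n (∑ i ∈ range (m + 1), ν i) = m := by
      refine ((inZone_iff (by omega)).1 ⟨?_, ?_⟩).2 <;> rw [← tt_of_ne_zero (Nat.add_one_ne_zero m)]
      · exact tt_lt_tt_succ hν (by omega)
      · exact le_add_of_nonneg_right (by positivity)
    rw [length, hz, ← tt_of_ne_zero (Nat.add_one_ne_zero m), ← lengthIn_tt_succ, if_neg (by omega),
      add_zero]

theorem lengthIn_zone_succ (hν : ∀ i, i ≤ n → 1 ≤ ν i) (j : ℕ) :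
    lengthIn ν n (zone ν n (j + 1)) (j + 1) = lengthIn ν n (zone ν n j) (j + 1) := by
  set m := zone ν n j
  have hle : m ≤ zone ν n (j + 1) :=
    (le_zone_iff (zone_le j)).2 ((tt_zone_lt j).trans (by push_cast; omega))
  rcases eq_or_lt_of_le hle with heq | hlt
  · rw [← heq]
  have hmn : m < n := hlt.trans_le (zone_le _)
  have hj : (j : ℤ) = tt ν (m + 1) := by
    have := (le_zone_iff (m := m + 1) (zone_le _ |>.trans' hlt)).1 hlt
    have : (j : ℤ) ≤ tt ν (m + 1) := le_tt_zone_succ hmn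
    push_cast at *
    omega
  have hz : zone ν n (j + 1) = m + 1 := by
    refine le_antisymm (not_lt.1 fun h => ?_) hlt
    have h₁ := (le_zone_iff (m := m + 2) ((zone_le _).trans' h)).1 h
    have h₂ : tt ν (m + 1) < tt ν (m + 2) :=
      tt_lt_tt_succ hν (by have := zone_le (ν := ν) (n := n) (j + 1); omega)
    push_cast at h₁
    omega
  have hL := lengthIn_tt_succ (ν := ν) (n := n) m
  rw [if_neg hmn.ne, add_zero] at hL
  rw [hz, hj, lengthIn_add_one m, hL, lengthIn, add_sub_cancel_left, one_mul]
  ring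

variable (ν n) in
def zoneBase (j : ℕ) : ℕ :=
  ∑ i ∈ range (zone ν n j), ν i

theorem zoneBase_le (j : ℕ) : zoneBase ν n j ≤ j := by
  rw [zoneBase]
  rcases eq_or_ne (zone ν n j) 0 with h | h
  · rw [h, sum_range_zero]
    exact Nat.zero_le j
  · have := tt_zone_lt (ν := ν) (n := n) j
    rw [tt_of_ne_zero h] at this
    exact_mod_cast this.le

theorem isNumerationSystem_length (hν : ∀ i, i ≤ n → 1 ≤ ν i) :
    IsNumerationSystem (length ν n) (zoneBase ν n) where
  lo_le := zoneBase_le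
  zero := length_zero
  succ j := by
    rw [zoneBase, length_sum_range hν (zone_le j), length, Nat.cast_succ, lengthIn_zone_succ hν,
      lengthIn_add_one]
    rfl

theorem length_top : length ν n (top ν n) = yy ν n (n + 2) := by
  have hz : zone ν n (top ν n) = n :=
    le_antisymm (zone_le _) ((le_zone_iff le_rfl).2 (by
      rw [top_eq]
      have := monotone_tt (ν := ν) (Nat.le_add_right n 1)
      omega))
  rw [length, hz, top_eq, ← lengthIn_tt_succ, if_pos rfl]

theorem lt_zoneBase_iff (hν : ∀ i, i ≤ n → 1 ≤ ν i) {i j : ℕ} :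
    i < zoneBase ν n j ↔
      zone ν n i < zone ν n j ∧
        ((i : ℤ) = tt ν (zone ν n i + 1) → zone ν n i + 2 ≤ zone ν n j) := by
  set m := zone ν n j
  set m' := zone ν n i
  have hmn : m ≤ n := zone_le j
  have hm' : tt ν m' < i := tt_zone_lt i
  have hS (hm : m ≠ 0) : i < zoneBase ν n j ↔ (i : ℤ) < tt ν m := by
    rw [zoneBase, tt_of_ne_zero hm, Nat.cast_lt]
  constructor
  · intro h
    have hm : m ≠ 0 := fun hm => by
      rw [zoneBase, show zone ν n j = 0 from hm, sum_range_zero] at h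
      omega
    have hi := (hS hm).1 h
    have hlt : m' < m := not_le.1 fun hle => (monotone_tt hle).not_gt (hm'.trans hi)
    refine ⟨hlt, fun he => not_lt.1 fun h2 => ?_⟩
    rw [show m = m' + 1 by omega] at hi
    exact hi.ne he
  · rintro ⟨hlt, htrig⟩
    have hm : m ≠ 0 := by omega
    have hi₁ : (i : ℤ) ≤ tt ν (m' + 1) := le_tt_zone_succ (hlt.trans_le hmn)
    have hi₂ := monotone_tt (ν := ν) (show m' + 1 ≤ m by omega)
    refine (hS hm).2 (lt_of_le_of_ne (hi₁.trans hi₂) fun he => ?_)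
    have hgap := htrig (le_antisymm hi₁ (he ▸ hi₂))
    have h₁ : tt ν (m' + 1) < tt ν (m' + 2) := tt_lt_tt_succ hν (by omega)
    have h₂ : tt ν (m' + 2) ≤ tt ν m := monotone_tt hgap
    omega

theorem InZone.toNat {m : ℕ} {x : ℤ} (hm : m ≤ n) (h : InZone ν n m x) :
    (x.toNat : ℤ) = x ∧ x.toNat < top ν n ∧ zone ν n x.toNat = m := by
  have hx := Int.toNat_of_nonneg h.nonneg
  rw [← hx] at h
  exact ⟨hx, (inZone_iff hm).1 h⟩

variable (ν n) in
def IsDecomposition {k : ℕ} (ξ : Fin k → ℕ) (β : Fin k → ℤ) : Prop :=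
  StrictMono ξ ∧ (∀ i, ξ i ≤ n) ∧ (∀ i, InZone ν n (ξ i) (β i)) ∧
    ∀ i j : Fin k, (i : ℕ) + 1 = j → β i = tt ν (ξ i + 1) → ξ i + 2 ≤ ξ j

variable (ν n) in
def ofFinset (S : Finset ℕ) : Σ k : ℕ, (Fin k → ℕ) × (Fin k → ℤ) :=
  ⟨S.card, fun i => zone ν n (S.orderEmbOfFin rfl i), fun i => S.orderEmbOfFin rfl i⟩

theorem ofFinset_eq_mk (S : Finset ℕ) {k : ℕ} (h : S.card = k) :
    ofFinset ν n S =
      ⟨k, fun i => zone ν n (S.orderEmbOfFin h i), fun i => S.orderEmbOfFin h i⟩ := by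
  subst h
  rfl

theorem isDecomposition_ofFinset (hν : ∀ i, i ≤ n → 1 ≤ ν i) {S : Finset ℕ}
    (hS : S ⊆ range (top ν n)) (hadm : Admissible (zoneBase ν n) S) :
    IsDecomposition ν n (ofFinset ν n S).2.1 (ofFinset ν n S).2.2 := by
  have hlt := (admissible_image_iff (S.orderEmbOfFin rfl).strictMono).1
    ((image_orderEmbOfFin_univ S rfl).symm ▸ hadm)
  exact ⟨fun i j hij => ((lt_zoneBase_iff hν).1 (hlt i j hij)).1, fun i => zone_le _,
    fun i => inZone_zone (mem_range.1 (hS (orderEmbOfFin_mem S rfl i))),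
    fun i j hij => ((lt_zoneBase_iff hν).1 (hlt i j (Fin.lt_def.2 (by omega)))).2⟩

theorem sum_length_eq_sum_lengthIn_ofFinset (S : Finset ℕ) :
    ∑ j ∈ S, length ν n j =
      ∑ i, lengthIn ν n ((ofFinset ν n S).2.1 i) ((ofFinset ν n S).2.2 i) := by
  conv_lhs => rw [← image_orderEmbOfFin_univ S rfl]
  rw [sum_image (S.orderEmbOfFin rfl).injective.injOn]
  rfl

def indexSet {k : ℕ} (β : Fin k → ℤ) : Finset ℕ :=
  univ.image fun i => (β i).toNat

namespace IsDecomposition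

variable {k : ℕ} {ξ : Fin k → ℕ} {β : Fin k → ℤ}

theorem toNat (h : IsDecomposition ν n ξ β) (i : Fin k) :
    ((β i).toNat : ℤ) = β i ∧ (β i).toNat < top ν n ∧ zone ν n (β i).toNat = ξ i :=
  (h.2.2.1 i).toNat (h.2.1 i)

theorem lt_zoneBase (hν : ∀ i, i ≤ n → 1 ≤ ν i) (h : IsDecomposition ν n ξ β) {i j : Fin k}
    (hij : i < j) : (β i).toNat < zoneBase ν n (β j).toNat := by
  rw [lt_zoneBase_iff hν, (h.toNat i).2.2, (h.toNat j).2.2, (h.toNat i).1]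
  refine ⟨h.1 hij, fun he => ?_⟩
  rcases eq_or_lt_of_le (show (i : ℕ) + 1 ≤ j from hij) with hj | hj
  · exact h.2.2.2 i j hj he
  · have := h.1 (show i < ⟨i + 1, hj.trans j.2⟩ from Fin.lt_def.2 (Nat.lt_succ_self _))
    have := h.1 (show (⟨i + 1, hj.trans j.2⟩ : Fin k) < j from Fin.lt_def.2 hj)
    omega

theorem strictMono_toNat (hν : ∀ i, i ≤ n → 1 ≤ ν i) (h : IsDecomposition ν n ξ β) :
    StrictMono fun i => (β i).toNat :=
  fun _ _ hij => (h.lt_zoneBase hν hij).trans_le (zoneBase_le _)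

theorem indexSet_subset (h : IsDecomposition ν n ξ β) : indexSet β ⊆ range (top ν n) :=
  fun j hj => by
    obtain ⟨i, -, rfl⟩ := mem_image.1 hj
    exact mem_range.2 (h.toNat i).2.1

theorem admissible_indexSet (hν : ∀ i, i ≤ n → 1 ≤ ν i) (h : IsDecomposition ν n ξ β) :
    Admissible (zoneBase ν n) (indexSet β) :=
  (admissible_image_iff (h.strictMono_toNat hν)).2 fun _ _ hij => h.lt_zoneBase hν hij

theorem sum_length_indexSet (hν : ∀ i, i ≤ n → 1 ≤ ν i) (h : IsDecomposition ν n ξ β) :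
    ∑ j ∈ indexSet β, length ν n j = ∑ i, lengthIn ν n (ξ i) (β i) := by
  rw [indexSet, sum_image (h.strictMono_toNat hν).injective.injOn]
  refine sum_congr rfl fun i _ => ?_
  rw [length, (h.toNat i).2.2, (h.toNat i).1]

theorem eq_ofFinset_indexSet (hν : ∀ i, i ≤ n → 1 ≤ ν i) (h : IsDecomposition ν n ξ β) :
    (⟨k, ξ, β⟩ : Σ k : ℕ, (Fin k → ℕ) × (Fin k → ℤ)) = ofFinset ν n (indexSet β) := by
  have hmono := h.strictMono_toNat hν
  have hcard : (indexSet β).card = k := by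
    rw [indexSet, card_image_of_injective _ hmono.injective, card_univ, Fintype.card_fin]
  rw [ofFinset_eq_mk _ hcard,
    ← orderEmbOfFin_unique hcard (fun i => mem_image_of_mem _ (mem_univ i)) hmono]
  congr 2 <;> funext i
  · exact (h.toNat i).2.2.symm
  · exact (h.toNat i).1.symm

end IsDecomposition

end TakahashiSuzuki

open TakahashiSuzuki in
theorem takahashi_suzuki_decomposition_general (p p' n : ℕ) (ν : ℕ → ℕ)
    (hco : Nat.Coprime p p') (h1 : p < p')
    (hν : ∀ i, i ≤ n → 1 ≤ ν i)
    (hcf : (p' : ℚ) / ((p' : ℚ) - p) = 1 + cf ν n 0)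
    (b : ℕ) (hb2 : b < p') :
    ∃! d : Σ k : ℕ, (Fin k → ℕ) × (Fin k → ℤ),
      StrictMono d.2.1 ∧
      (∀ i, d.2.1 i ≤ n) ∧
      (∀ i, tt ν (d.2.1 i) < d.2.2 i ∧
        d.2.2 i ≤ tt ν (d.2.1 i + 1) + (if d.2.1 i = n then 1 else 0)) ∧
      (∀ i j : Fin d.1, (i : ℕ) + 1 = (j : ℕ) → d.2.2 i = tt ν (d.2.1 i + 1) →
        d.2.1 i + 2 ≤ d.2.1 j) ∧
      (b : ℤ) = ∑ i, (yy ν n (d.2.1 i) + (d.2.2 i - tt ν (d.2.1 i)) * yy ν n (d.2.1 i + 1)) := by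
  have hb : (b : ℤ) < length ν n (top ν n) := by
    rw [length_top, ← eq_yy_of_cf_eq hco h1 hν hcf]
    exact_mod_cast hb2
  obtain ⟨S, ⟨hStop, hSadm, hSsum⟩, hSuniq⟩ :=
    (isNumerationSystem_length hν).existsUnique_sum_eq (Int.natCast_nonneg b) hb
  obtain ⟨c1, c2, c3, c4⟩ := isDecomposition_ofFinset hν hStop hSadm
  refine ⟨ofFinset ν n S,
    ⟨c1, c2, c3, c4, hSsum.symm.trans (sum_length_eq_sum_lengthIn_ofFinset S)⟩, ?_⟩
  rintro ⟨k, ξ, β⟩ ⟨g1, g2, g3, g4, g5⟩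
  have hd : IsDecomposition ν n ξ β := ⟨g1, g2, g3, g4⟩
  rw [hd.eq_ofFinset_indexSet hν, hSuniq _ ⟨hd.indexSet_subset, hd.admissible_indexSet hν,
    (hd.sum_length_indexSet hν).trans g5.symm⟩]

/-- Takahashi–Suzuki decomposition: for coprime $p < p' < 2p$ with continued
fraction data $\nu_0,\dots,\nu_n$ of $p'/(p'-p)$, every $1\le b<p'$ admits a
unique decomposition $b=\sum_{i=1}^k l_{\beta_i+1}$ (where
$l_{j+1}=y_{m-1}+(j-t_m)y_m$ for $t_m<j\le t_{m+1}+\delta_{m,n}$) with zones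
$\xi_1<\cdots<\xi_k$ and $\xi_{i+1}\ge\xi_i+2$ whenever $\beta_i=t_{\xi_i+1}$. -/
theorem takahashi_suzuki_decomposition (p p' n : ℕ) (ν : ℕ → ℕ)
    (hco : Nat.Coprime p p') (h1 : p < p') (h2 : p' < 2 * p)
    (hν : ∀ i, i ≤ n → 1 ≤ ν i)
    (hcf : (p' : ℚ) / ((p' : ℚ) - p) = 1 + cf ν n 0)
    (b : ℕ) (hb1 : 1 ≤ b) (hb2 : b < p') :
    ∃! d : Σ k : ℕ, (Fin k → ℕ) × (Fin k → ℤ),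
      StrictMono d.2.1 ∧
      (∀ i, d.2.1 i ≤ n) ∧
      (∀ i, tt ν (d.2.1 i) < d.2.2 i ∧
        d.2.2 i ≤ tt ν (d.2.1 i + 1) + (if d.2.1 i = n then 1 else 0)) ∧
      (∀ i j : Fin d.1, (i : ℕ) + 1 = (j : ℕ) → d.2.2 i = tt ν (d.2.1 i + 1) →
        d.2.1 i + 2 ≤ d.2.1 j) ∧
      (b : ℤ) = ∑ i, (yy ν n (d.2.1 i) + (d.2.2 i - tt ν (d.2.1 i)) * yy ν n (d.2.1 i + 1)) :=
  takahashi_suzuki_decomposition_general p p' n ν hco h1 hν hcf b hb2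
end
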